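/- arXiv:0810.4378 — 6 statements merged into one kernel-verified Lean document; each statement's English description precedes it below -/
import Mathlib

section
/- For every α > 0 there exist constants c > 0 and t₀ > 0 such that for all t ≥ t₀ one has C_{0,0}(t) > 0 and |1/C_{0,0}(t) − 1| ≤ c t^{-α} (in particular C_{0,0}(t) = 1 + O(t^{-α}) as t → ∞). -/
open MeasureTheory

/-- The interval `I_k = [t^α (2k-1), t^α (2k+1))`. -/
noncomputable def Ik (t α : ℝ) (k : ℤ) : Set ℝ :=
  Set.Ico (t ^ α * (2 * (k : ℝ) - 1)) (t ^ α * (2 * (k : ℝ) + 1))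

/-- The covariance entry `C_{ℓ,k}(t) = (1/(2 t^α)) ∫_{I_k} ∫_{I_ℓ} Q(x - y) dx dy`. -/
noncomputable def Cmat (Q : ℝ → ℝ) (t α : ℝ) (l k : ℤ) : ℝ :=
  (1 / (2 * t ^ α)) * ∫ y in Ik t α k, ∫ x in Ik t α l, Q (x - y)

theorem stmt2 (Q : ℝ → ℝ) (hQeven : ∀ x, Q (-x) = Q x) (hQnonneg : ∀ x, 0 ≤ Q x)
    (hQmono : AntitoneOn Q (Set.Ici 0))
    (hQint : Integrable Q) (hQnorm : (∫ x, Q x) = 1)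
    (c₀ θ : ℝ) (hc₀ : 0 < c₀) (hθ : 0 < θ)
    (hQdecay : ∀ x : ℝ, 1 ≤ |x| → Q x ≤ c₀ * |x| ^ (-(3 + θ)))
    (α : ℝ) (hα : 0 < α) :
    ∃ c > (0 : ℝ), ∃ t₀ > (0 : ℝ), ∀ t ≥ t₀,
      0 < Cmat Q t α 0 0 ∧ |1 / Cmat Q t α 0 0 - 1| ≤ c * t ^ (-α) := by
  -- the tail function
  set G : ℝ → ℝ := fun s => ∫ u in Set.Ioi s, Q u with hGdef
  have hG_anti : Antitone G := by
    intro s s' hss'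
    exact setIntegral_mono_set hQint.integrableOn
      (Filter.Eventually.of_forall hQnonneg)
      (HasSubset.Subset.eventuallyLE (Set.Ioi_subset_Ioi hss'))
  have hG_nonneg : ∀ s, 0 ≤ G s := fun s =>
    setIntegral_nonneg measurableSet_Ioi (fun u _ => hQnonneg u)
  have hG_le_one : ∀ s, G s ≤ 1 := by
    intro s
    rw [← hQnorm]
    exact setIntegral_le_integral hQint (Filter.Eventually.of_forall hQnonneg)
  -- value of the left tail
  have hIic : ∀ a : ℝ, (∫ u in Set.Iic a, Q u) = G (-a) := by
    intro a
    have := integral_comp_neg_Ioi (-a) Q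
    rw [neg_neg] at this
    rw [← this]
    exact setIntegral_congr_fun measurableSet_Ioi (fun x _ => hQeven x)
  -- decomposition of the integral over `Ioc a b`
  have hsplit : ∀ a b : ℝ, a ≤ b → (∫ u in Set.Ioc a b, Q u) = 1 - G (-a) - G b := by
    intro a b hab
    have h1 : (∫ u in Set.Iic a, Q u) + ∫ u in Set.Ioi a, Q u = 1 := by
      rw [intervalIntegral.integral_Iic_add_Ioi hQint.integrableOn hQint.integrableOn, hQnorm]
    have h2 : (∫ u in Set.Ioc a b, Q u) + ∫ u in Set.Ioi b, Q u
        = ∫ u in Set.Ioi a, Q u := by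
      rw [← setIntegral_union (Set.Ioc_disjoint_Ioi le_rfl) measurableSet_Ioi
        hQint.integrableOn hQint.integrableOn, Set.Ioc_union_Ioi_eq_Ioi hab]
    rw [hIic] at h1
    have : G b = ∫ u in Set.Ioi b, Q u := rfl
    linarith [h1, h2]

  -- constant M
  set M : ℝ := 1 + c₀ / ((2 + θ) * (1 + θ)) with hMdef
  have hM : 0 < M := by positivity
  refine ⟨2 * M, by positivity, max 1 ((2 * M) ^ (α⁻¹)), lt_of_lt_of_le one_pos (le_max_left _ _), ?_⟩
  intro t ht
  have ht1 : (1 : ℝ) ≤ t := le_trans (le_max_left _ _) ht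
  have ht0 : (0 : ℝ) < t := lt_of_lt_of_le one_pos ht1
  set T := t ^ α with hTdef
  have hT1 : 1 ≤ T := Real.one_le_rpow ht1 hα.le
  have hT0 : 0 < T := lt_of_lt_of_le one_pos hT1
  have hT2M : 2 * M ≤ T := by
    have h1 : (2 * M) ^ α⁻¹ ≤ t := le_trans (le_max_right _ _) ht
    calc 2 * M = ((2 * M) ^ α⁻¹) ^ α := (Real.rpow_inv_rpow (by positivity) hα.ne').symm
      _ ≤ t ^ α := Real.rpow_le_rpow (by positivity) h1 hα.le
  -- the interval
  have hIk : Ik t α 0 = Set.Ico (-T) T := by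
    unfold Ik
    norm_num
    rfl
  -- inner integral identity
  have hinner : ∀ y : ℝ, (∫ x in Set.Ico (-T) T, Q (x - y)) = 1 - G (T + y) - G (T - y) := by
    intro y
    rw [setIntegral_congr_set Ico_ae_eq_Ioc,
      ← intervalIntegral.integral_of_le (by linarith : -T ≤ T),
      intervalIntegral.integral_comp_sub_right _ y,
      intervalIntegral.integral_of_le (by linarith : -T - y ≤ T - y),
      hsplit _ _ (by linarith), show -(-T - y) = T + y by ring]
  -- interval integrability of the tail terms
  have hGadd : IntervalIntegrable (fun y => G (T + y)) volume (-T) T :=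
    Antitone.intervalIntegrable (fun a b hab => hG_anti (by linarith))
  have hGsub : IntervalIntegrable (fun y => G (T - y)) volume (-T) T :=
    Monotone.intervalIntegrable (fun a b hab => hG_anti (by linarith))
  set B : ℝ := ∫ s in (0 : ℝ)..(2 * T), G s with hBdef
  -- the outer integral
  have houter : (∫ y in Set.Ico (-T) T, (1 - G (T + y) - G (T - y))) = 2 * T - 2 * B := by
    rw [setIntegral_congr_set Ico_ae_eq_Ioc,
      ← intervalIntegral.integral_of_le (by linarith : -T ≤ T),
      intervalIntegral.integral_sub (intervalIntegrable_const.sub hGadd) hGsub,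
      intervalIntegral.integral_sub intervalIntegrable_const hGadd,
      intervalIntegral.integral_const,
      intervalIntegral.integral_comp_add_left G T,
      intervalIntegral.integral_comp_sub_left G T,
      show T + -T = 0 by ring, show T + T = 2 * T by ring,
      show T - T = 0 by ring, show T - -T = 2 * T by ring, smul_eq_mul]
    ring
  -- the value of Cmat
  have hC : Cmat Q t α 0 0 = 1 - B / T := by
    unfold Cmat
    rw [hIk]
    rw [setIntegral_congr_fun measurableSet_Ico (fun y _ => hinner y), houter]
    field_simp
    ring
  -- bounds on B
  have hB0 : 0 ≤ B := intervalIntegral.integral_nonneg (by linarith) fun s _ => hG_nonneg s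
  have hGs : ∀ s : ℝ, 1 ≤ s → G s ≤ c₀ / (2 + θ) * s ^ (-(2 + θ)) := by
    intro s hs
    have hs0 : (0 : ℝ) < s := by linarith
    have hmaj : IntegrableOn (fun u : ℝ => c₀ * u ^ (-(3 + θ))) (Set.Ioi s) :=
      (integrableOn_Ioi_rpow_of_lt (by linarith) hs0).const_mul c₀
    have h1 : G s ≤ ∫ u in Set.Ioi s, c₀ * u ^ (-(3 + θ)) := by
      refine setIntegral_mono_on hQint.integrableOn hmaj measurableSet_Ioi fun u hu => ?_
      have hu0 : s < u := hu
      have hu1 : (1 : ℝ) ≤ |u| := by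
        rw [abs_of_pos (hs0.trans hu0)]; linarith
      calc Q u ≤ c₀ * |u| ^ (-(3 + θ)) := hQdecay u hu1
        _ = c₀ * u ^ (-(3 + θ)) := by rw [abs_of_pos (hs0.trans hu0)]
    have h2 : (∫ u in Set.Ioi s, c₀ * u ^ (-(3 + θ)))
        = c₀ * (-s ^ (-(3 + θ) + 1) / (-(3 + θ) + 1)) := by
      rw [integral_const_mul, integral_Ioi_rpow_of_lt (by linarith) hs0]
    rw [h2, show -(3 + θ) + 1 = -(2 + θ) by ring] at h1
    calc G s ≤ c₀ * (-s ^ (-(2 + θ)) / -(2 + θ)) := h1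
      _ = c₀ / (2 + θ) * s ^ (-(2 + θ)) := by
        rw [neg_div_neg_eq]
        ring
  have hmaj1 : IntegrableOn (fun s : ℝ => c₀ / (2 + θ) * s ^ (-(2 + θ))) (Set.Ioi 1) :=
    (integrableOn_Ioi_rpow_of_lt (by linarith) one_pos).const_mul _
  have hBM : B ≤ M := by
    have h12 : (1 : ℝ) ≤ 2 * T := by linarith
    have hBsplit : B = (∫ s in (0 : ℝ)..1, G s) + ∫ s in (1 : ℝ)..(2 * T), G s :=
      (intervalIntegral.integral_add_adjacent_intervals
        (hG_anti.intervalIntegrable) (hG_anti.intervalIntegrable)).symm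
    have h1 : (∫ s in (0 : ℝ)..1, G s) ≤ 1 := by
      calc (∫ s in (0 : ℝ)..1, G s) ≤ ∫ s in (0 : ℝ)..1, (1 : ℝ) :=
            intervalIntegral.integral_mono_on zero_le_one
              (hG_anti.intervalIntegrable) intervalIntegrable_const
              fun s _ => hG_le_one s
        _ = 1 := by simp
    have hmajII : IntervalIntegrable (fun s : ℝ => c₀ / (2 + θ) * s ^ (-(2 + θ)))
        volume 1 (2 * T) := by
      apply AntitoneOn.intervalIntegrable
      intro a ha b hb hab
      have ha1 : (1 : ℝ) ≤ a := by
        rcases Set.mem_uIcc.mp ha with h | h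
        · exact h.1
        · linarith [h.1, h.2]
      have : b ^ (-(2 + θ)) ≤ a ^ (-(2 + θ)) :=
        Real.rpow_le_rpow_of_nonpos (by linarith) hab (by linarith)
      have hpos : (0:ℝ) ≤ c₀ / (2 + θ) := by positivity
      exact mul_le_mul_of_nonneg_left this hpos
    have h2 : (∫ s in (1 : ℝ)..(2 * T), G s) ≤ c₀ / ((2 + θ) * (1 + θ)) := by
      have step1 : (∫ s in (1 : ℝ)..(2 * T), G s)
          ≤ ∫ s in (1 : ℝ)..(2 * T), c₀ / (2 + θ) * s ^ (-(2 + θ)) :=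
        intervalIntegral.integral_mono_on h12 (hG_anti.intervalIntegrable) hmajII
          fun s hs => hGs s hs.1
      have step2 : (∫ s in (1 : ℝ)..(2 * T), c₀ / (2 + θ) * s ^ (-(2 + θ)))
          ≤ ∫ s in Set.Ioi (1 : ℝ), c₀ / (2 + θ) * s ^ (-(2 + θ)) := by
        rw [intervalIntegral.integral_of_le h12]
        refine setIntegral_mono_set hmaj1 ?_
          (HasSubset.Subset.eventuallyLE Set.Ioc_subset_Ioi_self)
        filter_upwards [ae_restrict_mem measurableSet_Ioi] with x hx
        have : (0 : ℝ) < x := lt_trans one_pos hx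
        positivity
      have step3 : (∫ s in Set.Ioi (1 : ℝ), c₀ / (2 + θ) * s ^ (-(2 + θ)))
          = c₀ / ((2 + θ) * (1 + θ)) := by
        rw [integral_const_mul, integral_Ioi_rpow_of_lt (by linarith) one_pos,
          Real.one_rpow, show -(2 + θ) + 1 = -(1 + θ) by ring, neg_div_neg_eq]
        field_simp
      linarith
    rw [hBsplit, hMdef]
    linarith
  -- conclusion
  have hBT : B / T ≤ 1 / 2 := by
    have h1 : B / T ≤ M / T := by
      gcongr
    have h2 : M / T ≤ M / (2 * M) := div_le_div_of_nonneg_left hM.le (by linarith) hT2M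
    have h3 : M / (2 * M) = 1 / 2 := by
      field_simp
    linarith
  have hCpos : 0 < Cmat Q t α 0 0 := by rw [hC]; linarith
  refine ⟨hCpos, ?_⟩
  have habs : |1 / Cmat Q t α 0 0 - 1| = (B / T) / Cmat Q t α 0 0 := by
    rw [hC]
    have hCC : (0:ℝ) < 1 - B / T := by linarith
    have hBltT : B < T := by nlinarith
    rw [abs_of_nonneg]
    · have hTB : T - B ≠ 0 := by nlinarith
      rw [eq_div_iff (ne_of_gt hCC)]
      field_simp
      ring
    · rw [sub_nonneg, le_div_iff₀ hCC]
      nlinarith [div_nonneg hB0 hT0.le]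
  have hfin : (B / T) / Cmat Q t α 0 0 ≤ (M / T) / (1 / 2) := by
    apply div_le_div₀ (by positivity) (by gcongr) one_half_pos
    rw [hC]; linarith
  have hrw : (M / T) / (1 / 2) = 2 * M * t ^ (-α) := by
    rw [Real.rpow_neg ht0.le, ← hTdef]
    field_simp
  rw [habs]
  calc (B / T) / Cmat Q t α 0 0 ≤ (M / T) / (1 / 2) := hfin
    _ = 2 * M * t ^ (-α) := hrw
end

section
/- For every α > 0 and every τ with 0 < τ < min(θ, 1), there exist constants c > 0 and t₀ > 0 such that for all t ≥ t₀ and every k ∈ ℤ, (1/C_{0,0}(t)) · Σ_{ℓ ∈ ℤ, ℓ ≠ k} |ℓ - k|^τ |C_{ℓ,k}(t)| ≤ c t^{-α}. -/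
open MeasureTheory

section Helpers

variable {Q : ℝ → ℝ} {c₀ θ : ℝ}

/-- Set integral over `Ico` equals interval integral. -/
lemma setIco_eq_interval (f : ℝ → ℝ) {a b : ℝ} (hab : a ≤ b) :
    ∫ x in Set.Ico a b, f x = ∫ x in a..b, f x := by
  rw [MeasureTheory.integral_Ico_eq_integral_Ioo, ← MeasureTheory.integral_Ioc_eq_integral_Ioo,
    ← intervalIntegral.integral_of_le hab]

/-- Translation formula for the inner integral. -/
lemma inner_eq (Q : ℝ → ℝ) (y : ℝ) {a b : ℝ} (hab : a ≤ b) :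
    ∫ x in Set.Ico a b, Q (x - y) = ∫ u in (a - y)..(b - y), Q u := by
  rw [setIco_eq_interval _ hab, intervalIntegral.integral_comp_sub_right]

/-- Tail bound: `∫_{s}^{s+L} Q ≤ c₀ s^(-2-θ)` for `s ≥ 1`. -/
lemma tail_bound (hQnonneg : ∀ x, 0 ≤ Q x) (hQint : Integrable Q)
    (hc₀ : 0 < c₀) (hθ : 0 < θ)
    (hQdecay : ∀ x : ℝ, 1 ≤ |x| → Q x ≤ c₀ * |x| ^ (-(3 + θ)))
    {s : ℝ} (L : ℝ) (hs : 1 ≤ s) :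
    ∫ u in s..(s + L), Q u ≤ c₀ * s ^ (-2 - θ) := by
  have hs0 : (0 : ℝ) < s := lt_of_lt_of_le one_pos hs
  rcases le_or_gt L 0 with hL | hL
  · have h1 : ∫ u in s..(s + L), Q u ≤ 0 := by
      rw [intervalIntegral.integral_of_ge (by linarith : s + L ≤ s)]
      simp only [neg_nonpos]
      exact setIntegral_nonneg measurableSet_Ioc fun u _ => hQnonneg u
    have h2 : (0:ℝ) ≤ c₀ * s ^ (-2 - θ) :=
      mul_nonneg (le_of_lt hc₀) (Real.rpow_nonneg (le_of_lt hs0) _)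
    linarith
  · have hle : s ≤ s + L := by linarith
    rw [intervalIntegral.integral_of_le hle]
    have h1 : ∫ u in Set.Ioc s (s + L), Q u ≤ ∫ u in Set.Ioi s, Q u := by
      refine setIntegral_mono_set hQint.integrableOn ?_ ?_
      · exact Filter.Eventually.of_forall fun u => hQnonneg u
      · exact Filter.Eventually.of_forall (Set.Ioc_subset_Ioi_self)
    have h2 : ∫ u in Set.Ioi s, Q u ≤ ∫ u in Set.Ioi s, c₀ * u ^ (-(3 + θ)) := by
      refine setIntegral_mono_on hQint.integrableOn
        ((integrableOn_Ioi_rpow_of_lt (by linarith) hs0).const_mul c₀) measurableSet_Ioi ?_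
      intro u hu
      have hu1 : (1 : ℝ) ≤ u := le_trans hs (le_of_lt hu)
      have := hQdecay u (by rwa [abs_of_pos (by linarith)])
      rwa [abs_of_pos (by linarith)] at this
    have h3 : ∫ u in Set.Ioi s, c₀ * u ^ (-(3 + θ)) = c₀ * (s ^ (-(3+θ)+1) / (2 + θ)) := by
      rw [MeasureTheory.integral_const_mul, integral_Ioi_rpow_of_lt (by linarith) hs0]
      congr 1
      rw [show (-(3+θ)+1 : ℝ) = -(2+θ) by ring, neg_div, div_neg, neg_neg]
    have h4 : c₀ * (s ^ (-(3+θ)+1) / (2 + θ)) ≤ c₀ * s ^ (-2 - θ) := by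
      have he : (-(3+θ)+1 : ℝ) = -2 - θ := by ring
      rw [he]
      have hnn : (0:ℝ) ≤ s ^ (-2 - θ) := Real.rpow_nonneg (le_of_lt hs0) _
      have : s ^ (-2 - θ) / (2 + θ) ≤ s ^ (-2 - θ) := by
        rw [div_le_iff₀ (by linarith)]
        nlinarith
      exact mul_le_mul_of_nonneg_left this (le_of_lt hc₀)
    calc _ ≤ _ := h1
      _ ≤ _ := h2
      _ = _ := h3
      _ ≤ _ := h4

end Helpers

section Helpers2

variable {Q : ℝ → ℝ} {c₀ θ : ℝ}

lemma interval_even (hQeven : ∀ x, Q (-x) = Q x) (a b : ℝ) :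
    ∫ u in a..b, Q u = ∫ u in (-b)..(-a), Q u := by
  have h := intervalIntegral.integral_comp_neg (a := a) (b := b) (f := Q)
  simp only [hQeven] at h
  exact h

/-- Bound for the integral over an adjacent cell. -/
lemma adj_bound (hQnonneg : ∀ x, 0 ≤ Q x) (hQint : Integrable Q)
    (hQnorm : (∫ x, Q x) = 1) (hc₀ : 0 < c₀) (hθ : 0 < θ)
    (hQdecay : ∀ x : ℝ, 1 ≤ |x| → Q x ≤ c₀ * |x| ^ (-(3 + θ)))
    {T b : ℝ} (hT : 1 ≤ T) {F : ℝ → ℝ} (hFc : Continuous F)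
    (hF : ∀ y, F y = ∫ u in (b - y)..(b + 2*T - y), Q u) :
    ∫ y in Set.Ico (b - 2*T) b, F y ≤ c₀ + 1 := by
  have hT0 : (0:ℝ) < T := lt_of_lt_of_le one_pos hT
  have hF1 : ∀ y, F y ≤ 1 := by
    intro y
    rw [hF y, intervalIntegral.integral_of_le (by linarith), ← hQnorm]
    exact setIntegral_le_integral hQint (Filter.Eventually.of_forall fun u => hQnonneg u)
  have hintF : ∀ a' b' : ℝ, IntegrableOn F (Set.Ico a' b') :=
    fun a' b' => (hFc.integrableOn_Icc).mono_set Set.Ico_subset_Icc_self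
  have hsplit : ∫ y in Set.Ico (b - 2*T) b, F y
      = (∫ y in Set.Ico (b - 2*T) (b-1), F y) + ∫ y in Set.Ico (b-1) b, F y := by
    rw [← Set.Ico_union_Ico_eq_Ico (by linarith) (by linarith : b - 1 ≤ b)]
    exact setIntegral_union Set.Ico_disjoint_Ico_same measurableSet_Ico (hintF _ _) (hintF _ _)
  set g : ℝ → ℝ := fun y => c₀ * (b - y) ^ (-2 - θ) with hg
  have hgco : ContinuousOn g (Set.Icc (b - 2*T) (b-1)) := by
    refine continuousOn_const.mul (((continuousOn_const.sub continuousOn_id)).rpow_const ?_)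
    intro y hy
    simp only [Set.mem_Icc] at hy
    simp only [Pi.sub_apply, id_eq]
    exact Or.inl (ne_of_gt (by linarith [hy.2]))
  have hP1 : ∫ y in Set.Ico (b - 2*T) (b-1), F y ≤ ∫ y in Set.Ico (b - 2*T) (b-1), g y := by
    refine setIntegral_mono_on (hintF _ _)
      ((hgco.integrableOn_Icc).mono_set Set.Ico_subset_Icc_self) measurableSet_Ico ?_
    intro y hy
    simp only [Set.mem_Ico] at hy
    rw [hF y, show b + 2*T - y = (b - y) + 2*T by ring]
    exact tail_bound hQnonneg hQint hc₀ hθ hQdecay (2*T) (by linarith [hy.2])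
  have hP1' : ∫ y in Set.Ico (b - 2*T) (b-1), g y ≤ c₀ := by
    rw [setIco_eq_interval _ (by linarith : b - 2*T ≤ b - 1), hg]
    simp only
    rw [intervalIntegral.integral_const_mul,
      intervalIntegral.integral_comp_sub_left (fun u => u ^ (-2 - θ)) b,
      show b - (b-1) = (1:ℝ) by ring, show b - (b - 2*T) = 2*T by ring]
    have h1 : ∫ u in (1:ℝ)..(2*T), u ^ (-2 - θ) ≤ ∫ u in Set.Ioi (1:ℝ), u ^ (-2 - θ) := by
      rw [intervalIntegral.integral_of_le (by linarith)]
      refine setIntegral_mono_set (integrableOn_Ioi_rpow_of_lt (by linarith) one_pos) ?_ ?_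
      · refine (ae_restrict_iff' measurableSet_Ioi).2
          (Filter.Eventually.of_forall fun u hu => Real.rpow_nonneg ?_ _)
        exact le_of_lt (lt_trans one_pos hu)
      · exact Filter.Eventually.of_forall (Set.Ioc_subset_Ioi_self)
    have h2 : ∫ u in Set.Ioi (1:ℝ), u ^ (-2 - θ) ≤ 1 := by
      rw [integral_Ioi_rpow_of_lt (by linarith : (-2-θ:ℝ) < -1) one_pos, Real.one_rpow,
        show (-2 - θ + 1 : ℝ) = -(1+θ) by ring, div_neg, neg_div, neg_neg, div_le_one (by linarith)]
      linarith
    calc c₀ * ∫ u in (1:ℝ)..(2*T), u ^ (-2 - θ) ≤ c₀ * 1 := by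
          refine mul_le_mul_of_nonneg_left (le_trans h1 h2) (le_of_lt hc₀)
      _ = c₀ := mul_one c₀
  have hP2 : ∫ y in Set.Ico (b-1) b, F y ≤ 1 := by
    have : ∫ y in Set.Ico (b-1) b, F y ≤ ∫ _y in Set.Ico (b-1) b, (1:ℝ) := by
      refine setIntegral_mono_on (hintF _ _) ?_ measurableSet_Ico fun y _ => hF1 y
      exact integrableOn_const (by rw [Real.volume_Ico]; exact ENNReal.ofReal_ne_top)
    rw [setIntegral_const, measureReal_def, Real.volume_Ico, show b - (b-1) = (1:ℝ) by ring] at this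
    simpa using this
  linarith

end Helpers2

set_option maxHeartbeats 1000000 in
theorem stmt3 (Q : ℝ → ℝ) (hQeven : ∀ x, Q (-x) = Q x) (hQnonneg : ∀ x, 0 ≤ Q x)
    (hQmono : AntitoneOn Q (Set.Ici 0))
    (hQint : Integrable Q) (hQnorm : (∫ x, Q x) = 1)
    (c₀ θ : ℝ) (hc₀ : 0 < c₀) (hθ : 0 < θ)
    (hQdecay : ∀ x : ℝ, 1 ≤ |x| → Q x ≤ c₀ * |x| ^ (-(3 + θ)))
    (α : ℝ) (hα : 0 < α) (τ : ℝ) (hτ0 : 0 < τ) (hτ1 : τ < min θ 1) :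
    ∃ c > (0 : ℝ), ∃ t₀ > (0 : ℝ), ∀ t ≥ t₀, ∀ k : ℤ,
      (1 / Cmat Q t α 0 0) *
        ∑' l : {l : ℤ // l ≠ k}, |((l : ℤ) : ℝ) - (k : ℝ)| ^ τ * |Cmat Q t α l k|
        ≤ c * t ^ (-α) := by
  have hτθ : τ < θ := lt_of_lt_of_le hτ1 (min_le_left _ _)
  -- choice of R
  obtain ⟨R₀, hR₀⟩ : ∃ R₀ : ℝ, ∀ r ≥ R₀, (1:ℝ)/2 ≤ ∫ u in (-r)..r, Q u := by
    have h := MeasureTheory.intervalIntegral_tendsto_integral (μ := volume) hQint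
      (Filter.tendsto_neg_atTop_atBot) Filter.tendsto_id (l := Filter.atTop)
    rw [hQnorm] at h
    exact Filter.eventually_atTop.1 (h.eventually_const_le (show (1:ℝ)/2 < 1 by norm_num))
  set R : ℝ := max R₀ 1 with hRdef
  have hR1 : (1:ℝ) ≤ R := le_max_right _ _
  have hRhalf : (1:ℝ)/2 ≤ ∫ u in (-R)..R, Q u := hR₀ R (le_max_left _ _)
  -- the sum S
  have hSsum : Summable (fun n : ℤ => |(n:ℝ)| ^ (τ - 3 - θ)) := by
    have h := Real.summable_abs_int_rpow (show (1:ℝ) < 3 + θ - τ by linarith)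
    have he : (τ - 3 - θ : ℝ) = -(3 + θ - τ) := by ring
    simpa [he] using h
  set S : ℝ := ∑' n : ℤ, |(n:ℝ)| ^ (τ - 3 - θ) with hSdef
  have hS0 : 0 ≤ S := tsum_nonneg fun n => Real.rpow_nonneg (abs_nonneg _) _
  set K : ℝ := 1 + 3*c₀ with hKdef
  have hK0 : (0:ℝ) < K := by rw [hKdef]; linarith
  have hKS : (0:ℝ) ≤ 4*K*S := mul_nonneg (mul_nonneg (by norm_num) hK0.le) hS0
  refine ⟨4*K*S + 1, by linarith, ?_⟩
  set M : ℝ := max (2*R) 1 with hMdef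
  have hM1 : (1:ℝ) ≤ M := le_max_right _ _
  have hM0 : (0:ℝ) < M := lt_of_lt_of_le one_pos hM1
  refine ⟨M ^ (α⁻¹ : ℝ), Real.rpow_pos_of_pos hM0 _, ?_⟩
  intro t ht k
  have ht₀pos : (0:ℝ) < M ^ (α⁻¹ : ℝ) := Real.rpow_pos_of_pos hM0 _
  have ht0 : 0 < t := lt_of_lt_of_le ht₀pos ht
  set T : ℝ := t ^ α with hTdef
  have hT0 : 0 < T := Real.rpow_pos_of_pos ht0 α
  have hMT : M ≤ T := by
    have h1 : (M ^ (α⁻¹:ℝ)) ^ α ≤ t ^ α := Real.rpow_le_rpow (le_of_lt ht₀pos) ht (le_of_lt hα)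
    rwa [← Real.rpow_mul (le_of_lt hM0), inv_mul_cancel₀ (ne_of_gt hα), Real.rpow_one] at h1
  have hT1 : 1 ≤ T := le_trans hM1 hMT
  have h2RT : 2*R ≤ T := le_trans (le_max_left _ _) hMT
  -- infrastructure
  have hIk : ∀ l : ℤ, Ik t α l = Set.Ico (T*(2*(l:ℝ)-1)) (T*(2*(l:ℝ)+1)) := fun l => rfl
  have hIab : ∀ l : ℤ, T*(2*(l:ℝ)-1) ≤ T*(2*(l:ℝ)+1) :=
    fun l => mul_le_mul_of_nonneg_left (by linarith) hT0.le
  set H : ℝ → ℝ := fun z => ∫ u in (0:ℝ)..z, Q u with hHdef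
  have hHc : Continuous H := hQint.continuous_primitive 0
  have hHsub : ∀ z1 z2 : ℝ, H z2 - H z1 = ∫ u in z1..z2, Q u := fun z1 z2 =>
    intervalIntegral.integral_interval_sub_left hQint.intervalIntegrable hQint.intervalIntegrable
  have hHmono : Monotone H := by
    intro z1 z2 h
    have h1 := hHsub z1 z2
    have h2 : 0 ≤ ∫ u in z1..z2, Q u :=
      intervalIntegral.integral_nonneg h (fun u _ => hQnonneg u)
    linarith
  set F : ℤ → ℝ → ℝ := fun l y => ∫ x in Ik t α l, Q (x - y) with hFdef
  have hFeqI : ∀ (l : ℤ) (y : ℝ),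
      F l y = ∫ u in (T*(2*(l:ℝ)-1) - y)..(T*(2*(l:ℝ)+1) - y), Q u := by
    intro l y
    rw [hFdef]
    simp only
    rw [hIk l]
    exact inner_eq Q y (hIab l)
  have hFeqH : ∀ (l : ℤ) (y : ℝ),
      F l y = H (T*(2*(l:ℝ)+1) - y) - H (T*(2*(l:ℝ)-1) - y) := by
    intro l y
    rw [hFeqI l y]
    exact (hHsub _ _).symm
  have hFcont : ∀ l, Continuous (F l) := by
    intro l
    have h : F l = fun y => H (T*(2*(l:ℝ)+1) - y) - H (T*(2*(l:ℝ)-1) - y) := funext (hFeqH l)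
    rw [h]
    exact (hHc.comp (continuous_const.sub continuous_id)).sub
      (hHc.comp (continuous_const.sub continuous_id))
  have hFnonneg : ∀ (l : ℤ) (y : ℝ), 0 ≤ F l y := by
    intro l y
    rw [hFdef]
    simp only
    rw [hIk l]
    exact setIntegral_nonneg measurableSet_Ico fun x _ => hQnonneg _
  have hFint : ∀ (l : ℤ) (a' b' : ℝ), IntegrableOn (F l) (Set.Ico a' b') :=
    fun l a' b' => ((hFcont l).integrableOn_Icc).mono_set Set.Ico_subset_Icc_self
  have hCeq : ∀ l k' : ℤ, Cmat Q t α l k' = (1/(2*T)) * ∫ y in Ik t α k', F l y :=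
    fun l k' => rfl
  have hCnonneg : ∀ l k' : ℤ, 0 ≤ Cmat Q t α l k' := by
    intro l k'
    rw [hCeq, hIk k']
    exact mul_nonneg (by positivity)
      (setIntegral_nonneg measurableSet_Ico fun y _ => hFnonneg l y)
  -- lower bound on C₀₀
  have hC00 : (1:ℝ)/4 ≤ Cmat Q t α 0 0 := by
    have hIk0 : Ik t α 0 = Set.Ico (-T) T := by
      rw [hIk]; norm_num
    have hF0 : ∀ y ∈ Set.Icc (-(T/2)) (T/2), (1:ℝ)/2 ≤ F 0 y := by
      intro y hy
      simp only [Set.mem_Icc] at hy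
      have heq : F 0 y = H (T - y) - H (-T - y) := by
        rw [hFeqH 0 y]
        norm_num
      rw [heq]
      have h1 : H R ≤ H (T - y) := hHmono (by linarith)
      have h2 : H (-T - y) ≤ H (-R) := hHmono (by linarith)
      have h3 : H R - H (-R) = ∫ u in (-R)..R, Q u := hHsub _ _
      linarith [hRhalf]
    have hmono1 : ∫ y in Set.Icc (-(T/2)) (T/2), F 0 y ≤ ∫ y in Ik t α 0, F 0 y := by
      rw [hIk0]
      refine setIntegral_mono_set (hFint 0 _ _)
        (Filter.Eventually.of_forall fun y => hFnonneg 0 y)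
        (HasSubset.Subset.eventuallyLE ?_)
      intro y hy
      simp only [Set.mem_Icc] at hy
      simp only [Set.mem_Ico]
      constructor <;> [linarith [hy.1]; linarith [hy.2]]
    have hconst : (1:ℝ)/2 * T ≤ ∫ y in Set.Icc (-(T/2)) (T/2), F 0 y := by
      have h := setIntegral_mono_on
        (integrableOn_const (by rw [Real.volume_Icc]; exact ENNReal.ofReal_ne_top))
        ((hFcont 0).integrableOn_Icc) measurableSet_Icc hF0
      rw [setIntegral_const, measureReal_def, Real.volume_Icc, smul_eq_mul,
        ENNReal.toReal_ofReal (by linarith)] at h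
      calc (1:ℝ)/2 * T = (T/2 - -(T/2)) * (1/2) := by ring
        _ ≤ _ := h
    rw [hCeq 0 0]
    have hX : T/2 ≤ ∫ y in Ik t α 0, F 0 y := by linarith
    have heq4 : (1/(2*T)) * (T/2) = (1:ℝ)/4 := by
      field_simp; ring
    calc (1:ℝ)/4 = (1/(2*T)) * (T/2) := heq4.symm
      _ ≤ (1/(2*T)) * ∫ y in Ik t α 0, F 0 y :=
          mul_le_mul_of_nonneg_left hX (by positivity)
  -- adjacent-cell bound
  have hadj : ∀ l k' : ℤ, (l = k' + 1 ∨ l = k' - 1) → Cmat Q t α l k' ≤ (1 + c₀) * T⁻¹ := by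
    intro l k' hcase
    have hbound : ∫ y in Ik t α k', F l y ≤ c₀ + 1 := by
      rcases hcase with rfl | rfl
      · -- l = k' + 1
        set b : ℝ := T*(2*(k':ℝ)+1) with hb
        have hIkk : Ik t α k' = Set.Ico (b - 2*T) b := by
          rw [hIk]; congr 1; rw [hb]; ring
        have hFform : ∀ y, F (k'+1) y = ∫ u in (b - y)..(b + 2*T - y), Q u := by
          intro y
          rw [hFeqI (k'+1) y]
          congr 1 <;> (rw [hb]; push_cast; ring)
        rw [hIkk]
        exact adj_bound hQnonneg hQint hQnorm hc₀ hθ hQdecay hT1 (hFcont _) hFform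
      · -- l = k' - 1
        set cc : ℝ := T*(2*(k':ℝ)-1) with hc
        have hIkk : Ik t α k' = Set.Ico cc (cc + 2*T) := by
          rw [hIk]; congr 1; rw [hc]; ring
        have hstep : ∫ y in Set.Ico cc (cc + 2*T), F (k'-1) y
            = ∫ z in Set.Ico ((0:ℝ) - 2*T) (0:ℝ), F (k'-1) (cc - z) := by
          rw [setIco_eq_interval _ (by linarith), setIco_eq_interval _ (by linarith),
            intervalIntegral.integral_comp_sub_left (F (k'-1)) cc]
          congr 1 <;> ring
        have hFform : ∀ z, F (k'-1) (cc - z) = ∫ u in ((0:ℝ) - z)..((0:ℝ) + 2*T - z), Q u := by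
          intro z
          rw [hFeqI (k'-1) (cc - z)]
          have e1 : T*(2*((k'-1:ℤ):ℝ)-1) - (cc - z) = z - 2*T := by
            rw [hc]; push_cast; ring
          have e2 : T*(2*((k'-1:ℤ):ℝ)+1) - (cc - z) = z := by
            rw [hc]; push_cast; ring
          rw [e1, e2, interval_even hQeven]
          congr 1 <;> ring
        rw [hIkk, hstep]
        exact adj_bound hQnonneg hQint hQnorm hc₀ hθ hQdecay hT1
          ((hFcont _).comp (continuous_const.sub continuous_id)) hFform
    rw [hCeq]
    have h1 : (1/(2*T)) * ∫ y in Ik t α k', F l y ≤ (1/(2*T)) * (c₀ + 1) := by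
      refine mul_le_mul_of_nonneg_left hbound (by positivity)
    refine le_trans h1 ?_
    rw [one_div, mul_inv]
    have hu0 : (0:ℝ) ≤ T⁻¹ := inv_nonneg.2 hT0.le
    have h2 : (2:ℝ)⁻¹ * T⁻¹ * (c₀ + 1) = ((c₀+1) * 2⁻¹) * T⁻¹ := by ring
    rw [h2]
    exact mul_le_mul_of_nonneg_right (by linarith) hu0
  -- far-cell bound
  have hfar : ∀ l k' : ℤ, (2 ≤ l - k' ∨ 2 ≤ k' - l) →
      Cmat Q t α l k' ≤ 2*T*(c₀ * (T * |((l-k' : ℤ):ℝ)|) ^ (-(3+θ))) := by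
    intro l k' hm
    set m : ℝ := |((l-k' : ℤ):ℝ)| with hmdef
    have hm2 : (2:ℝ) ≤ m := by
      rw [hmdef, ← Int.cast_abs]
      have : (2:ℤ) ≤ |l - k'| := by
        rcases hm with h | h
        · exact le_abs.2 (Or.inl h)
        · exact le_abs.2 (Or.inr (by omega))
      exact_mod_cast this
    have hm0' : (0:ℝ) < m := by linarith
    have hTm0 : (0:ℝ) < T*m := mul_pos hT0 hm0'
    have hTm1 : (1:ℝ) ≤ T*m := by
      have : (1:ℝ)*1 ≤ T*m := mul_le_mul hT1 (by linarith) (by norm_num) (by linarith)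
      linarith
    have hgeo : ∀ y ∈ Ik t α k', ∀ x ∈ Ik t α l, T * m ≤ |x - y| := by
      intro y hy x hx
      rw [hIk] at hy hx
      simp only [Set.mem_Ico] at hy hx
      rcases hm with h | h
      · have hlk : (2:ℝ) ≤ (l:ℝ) - (k':ℝ) := by exact_mod_cast h
        have hmeq : m = (l:ℝ) - (k':ℝ) := by
          rw [hmdef, ← Int.cast_abs, abs_of_nonneg (by omega : (0:ℤ) ≤ l - k')]
          push_cast; ring
        have he1 : T*(2*((l:ℝ)-(k':ℝ)) - 2) = T*(2*(l:ℝ)-1) - T*(2*(k':ℝ)+1) := by ring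
        have h1 : T*(2*((l:ℝ)-(k':ℝ)) - 2) < x - y := by
          rw [he1]; linarith [hx.1, hy.2]
        have h2 : T*m ≤ T*(2*((l:ℝ)-(k':ℝ)) - 2) := by
          rw [hmeq]
          exact mul_le_mul_of_nonneg_left (by linarith) hT0.le
        rw [abs_of_pos (by linarith)]
        linarith
      · have hlk : (2:ℝ) ≤ (k':ℝ) - (l:ℝ) := by exact_mod_cast h
        have hmeq : m = (k':ℝ) - (l:ℝ) := by
          rw [hmdef, ← Int.cast_abs, abs_of_nonpos (by omega : l - k' ≤ (0:ℤ))]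
          push_cast; ring
        have he1 : T*(2*((k':ℝ)-(l:ℝ)) - 2) = T*(2*(k':ℝ)-1) - T*(2*(l:ℝ)+1) := by ring
        have h1 : T*(2*((k':ℝ)-(l:ℝ)) - 2) < y - x := by
          rw [he1]; linarith [hy.1, hx.2]
        have h2 : T*m ≤ T*(2*((k':ℝ)-(l:ℝ)) - 2) := by
          rw [hmeq]
          exact mul_le_mul_of_nonneg_left (by linarith) hT0.le
        rw [abs_of_neg (by linarith)]
        linarith
    have hpt : ∀ y ∈ Ik t α k', ∀ x ∈ Ik t α l, Q (x - y) ≤ c₀ * (T*m) ^ (-(3+θ)) := by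
      intro y hy x hx
      have h1 := hgeo y hy x hx
      have hTm0 : (0:ℝ) < T*m := mul_pos hT0 (by linarith)
      have hQx : Q (x - y) = Q |x - y| := by
        rcases le_or_gt 0 (x - y) with h | h
        · rw [abs_of_nonneg h]
        · rw [abs_of_neg h]; exact (hQeven (x-y)).symm
      rw [hQx]
      calc Q |x-y| ≤ Q (T*m) :=
            hQmono (Set.mem_Ici.2 hTm0.le) (Set.mem_Ici.2 (abs_nonneg _)) h1
        _ ≤ c₀ * |T*m| ^ (-(3+θ)) := hQdecay _ (by rwa [abs_of_pos hTm0])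
        _ = c₀ * (T*m) ^ (-(3+θ)) := by rw [abs_of_pos hTm0]
    set B : ℝ := c₀ * (T*m) ^ (-(3+θ)) with hBdef
    have hB0 : 0 ≤ B := mul_nonneg hc₀.le (Real.rpow_nonneg hTm0.le _)
    have hvol : ∀ l' : ℤ, (volume (Ik t α l')).toReal = 2*T := by
      intro l'
      rw [hIk, Real.volume_Ico, ENNReal.toReal_ofReal
        (by rw [show T*(2*(l':ℝ)+1) - T*(2*(l':ℝ)-1) = 2*T by ring]; linarith)]
      ring
    have hFb : ∀ y ∈ Ik t α k', F l y ≤ 2*T*B := by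
      intro y hy
      have h1 : F l y ≤ ∫ _x in Ik t α l, B := by
        rw [hFdef]
        simp only
        refine setIntegral_mono_on ((hQint.comp_sub_right y).integrableOn) ?_ ?_ ?_
        · rw [hIk l]
          exact integrableOn_const
            (by rw [Real.volume_Ico]; exact ENNReal.ofReal_ne_top)
        · rw [hIk l]; exact measurableSet_Ico
        · exact fun x hx => hpt y hy x hx
      rw [setIntegral_const, smul_eq_mul, measureReal_def, hvol l] at h1
      exact h1
    have houter : ∫ y in Ik t α k', F l y ≤ 2*T*(2*T*B) := by
      have h1 : ∫ y in Ik t α k', F l y ≤ ∫ _y in Ik t α k', (2*T*B) := by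
        refine setIntegral_mono_on ?_ ?_ ?_ hFb
        · rw [hIk k']; exact hFint l _ _
        · rw [hIk k']
          exact integrableOn_const
            (by rw [Real.volume_Ico]; exact ENNReal.ofReal_ne_top)
        · rw [hIk k']; exact measurableSet_Ico
      rw [setIntegral_const, smul_eq_mul, measureReal_def, hvol k'] at h1
      exact h1
    rw [hCeq]
    calc (1/(2*T)) * ∫ y in Ik t α k', F l y ≤ (1/(2*T)) * (2*T*(2*T*B)) :=
          mul_le_mul_of_nonneg_left houter (by positivity)
      _ = 2*T*B := by field_simp
  -- combined per-term bound
  have key : ∀ l k' : ℤ, l ≠ k' →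
      |(l:ℝ) - (k':ℝ)| ^ τ * Cmat Q t α l k'
        ≤ K * T⁻¹ * |((l - k' : ℤ):ℝ)| ^ (τ - 3 - θ) := by
    intro l k' hlk
    have hcast : |(l:ℝ) - (k':ℝ)| = |((l - k' : ℤ):ℝ)| := by push_cast; ring_nf
    set m : ℝ := |((l - k' : ℤ):ℝ)| with hmdef
    have hm0 : 0 < m := abs_pos.2 (Int.cast_ne_zero.2 (sub_ne_zero.2 hlk))
    have hu0 : (0:ℝ) ≤ T⁻¹ := inv_nonneg.2 hT0.le
    rw [hcast]
    rcases (by omega : l = k' + 1 ∨ l = k' - 1 ∨ (2 ≤ l - k' ∨ 2 ≤ k' - l)) with h | h | h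
    · have hCb := hadj l k' (Or.inl h)
      have hm1 : m = 1 := by rw [hmdef, h]; simp
      rw [hm1, Real.one_rpow, Real.one_rpow, one_mul, mul_one]
      refine le_trans hCb ?_
      rw [hKdef]
      nlinarith [hc₀.le]
    · have hCb := hadj l k' (Or.inr h)
      have hm1 : m = 1 := by rw [hmdef, h]; simp
      rw [hm1, Real.one_rpow, Real.one_rpow, one_mul, mul_one]
      refine le_trans hCb ?_
      rw [hKdef]
      nlinarith [hc₀.le]
    · have hCb := hfar l k' h
      have step1 : m ^ τ * Cmat Q t α l k' ≤ m ^ τ * (2*T*(c₀ * (T*m) ^ (-(3+θ)))) :=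
        mul_le_mul_of_nonneg_left hCb (Real.rpow_nonneg hm0.le _)
      have halg : m ^ τ * (2*T*(c₀ * (T*m) ^ (-(3+θ))))
          = 2*c₀ * (T * T ^ (-(3+θ))) * (m ^ τ * m ^ (-(3+θ))) := by
        rw [Real.mul_rpow hT0.le hm0.le]; ring
      have hTT : T * T ^ (-(3+θ)) = T ^ (1 + -(3+θ)) := by
        rw [Real.rpow_add hT0, Real.rpow_one]
      have hmm : m ^ τ * m ^ (-(3+θ)) = m ^ (τ - 3 - θ) := by
        rw [← Real.rpow_add hm0]; congr 1; ring
      have hTle : T ^ (1 + -(3+θ)) ≤ T ^ (-1 : ℝ) :=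
        Real.rpow_le_rpow_of_exponent_le hT1 (by linarith)
      have hmnn : (0:ℝ) ≤ m ^ (τ - 3 - θ) := Real.rpow_nonneg hm0.le _
      calc m ^ τ * Cmat Q t α l k' ≤ 2*c₀ * (T ^ (1 + -(3+θ))) * (m ^ (τ - 3 - θ)) := by
            rw [← hmm, ← hTT]; linarith [step1, halg.le, halg.ge]
        _ ≤ 2*c₀ * (T ^ (-1:ℝ)) * (m ^ (τ - 3 - θ)) := by
            refine mul_le_mul_of_nonneg_right (mul_le_mul_of_nonneg_left hTle (by linarith)) hmnn
        _ = 2*c₀ * T⁻¹ * m ^ (τ - 3 - θ) := by rw [Real.rpow_neg_one]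
        _ ≤ K * T⁻¹ * m ^ (τ - 3 - θ) := by
            refine mul_le_mul_of_nonneg_right (mul_le_mul_of_nonneg_right ?_ hu0) hmnn
            rw [hKdef]; linarith
  -- sum everything
  set e : {l : ℤ // l ≠ k} → ℤ := fun l => (l : ℤ) - k with he
  have he_inj : Function.Injective e := by
    intro a b hab
    apply Subtype.ext
    rw [he] at hab
    simp only at hab
    omega
  set g : ℤ → ℝ := fun n => K * T⁻¹ * |(n:ℝ)| ^ (τ - 3 - θ) with hgdef
  have hgsum : Summable g := hSsum.mul_left _
  have hu0 : (0:ℝ) ≤ T⁻¹ := inv_nonneg.2 hT0.le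
  have hgnonneg : ∀ n, 0 ≤ g n := fun n =>
    mul_nonneg (mul_nonneg hK0.le hu0) (Real.rpow_nonneg (abs_nonneg _) _)
  have hterm : ∀ l : {l : ℤ // l ≠ k},
      |((l : ℤ):ℝ) - (k:ℝ)| ^ τ * |Cmat Q t α l k| ≤ g (e l) := by
    intro l
    rw [abs_of_nonneg (hCnonneg l k)]
    exact key l k l.2
  have htermnn : ∀ l : {l : ℤ // l ≠ k},
      0 ≤ |((l : ℤ):ℝ) - (k:ℝ)| ^ τ * |Cmat Q t α l k| :=
    fun l => mul_nonneg (Real.rpow_nonneg (abs_nonneg _) _) (abs_nonneg _)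
  have hsum1 : Summable (fun l : {l : ℤ // l ≠ k} =>
      |((l : ℤ):ℝ) - (k:ℝ)| ^ τ * |Cmat Q t α l k|) :=
    Summable.of_nonneg_of_le htermnn hterm (hgsum.comp_injective he_inj)
  have hts : (∑' l : {l : ℤ // l ≠ k}, |((l : ℤ):ℝ) - (k:ℝ)| ^ τ * |Cmat Q t α l k|)
      ≤ ∑' n : ℤ, g n :=
    hsum1.tsum_le_tsum_of_inj e he_inj (fun n _ => hgnonneg n) hterm hgsum
  have htg : ∑' n : ℤ, g n = K * T⁻¹ * S := by
    rw [hgdef, hSdef]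
    exact tsum_mul_left
  have hCpos : 0 < Cmat Q t α 0 0 := lt_of_lt_of_le (by norm_num) hC00
  have hinv : 1 / Cmat Q t α 0 0 ≤ 4 := by
    rw [div_le_iff₀ hCpos]; linarith
  have htnonneg : 0 ≤ ∑' l : {l : ℤ // l ≠ k},
      |((l : ℤ):ℝ) - (k:ℝ)| ^ τ * |Cmat Q t α l k| := tsum_nonneg htermnn
  have hrw : t ^ (-α) = T⁻¹ := by
    have h := Real.rpow_neg ht0.le α
    rw [← hTdef] at h
    exact h
  calc (1 / Cmat Q t α 0 0) *
        ∑' l : {l : ℤ // l ≠ k}, |((l : ℤ):ℝ) - (k:ℝ)| ^ τ * |Cmat Q t α l k|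
      ≤ 4 * (K * T⁻¹ * S) := by
        refine mul_le_mul hinv (le_trans hts (le_of_eq htg)) htnonneg (by norm_num)
    _ = (4*K*S) * T⁻¹ := by ring
    _ ≤ (4*K*S + 1) * T⁻¹ := mul_le_mul_of_nonneg_right (by linarith [mul_nonneg (mul_nonneg (by linarith : (0:ℝ) ≤ 4) hK0.le) hS0]) hu0
    _ = (4*K*S + 1) * t ^ (-α) := by rw [hrw]
end

section
/- For every α > 0 and every τ with 0 < τ < min(θ, 1), there exists a constant κ > 0 such that for every t ≥ 1, every k ∈ ℤ and every measurable path b : [0,t] → ℝ localized in I_k, Σ_{ℓ ∈ ℤ, |ℓ - k| ≥ 2} |ℓ - k|^τ v_ℓ(b) ≤ κ t^{-α(2+θ)}. -/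
open MeasureTheory

/-- The interaction vector `v_ℓ(b) = (2/t) ∫_{t/2}^t ∫_{I_ℓ} Q(b_s - x) dx ds`. -/
noncomputable def vvec (Q : ℝ → ℝ) (t α : ℝ) (b : ℝ → ℝ) (l : ℤ) : ℝ :=
  (2 / t) * ∫ s in (t / 2)..t, ∫ x in Ik t α l, Q (b s - x)

set_option maxHeartbeats 1000000 in
theorem stmt7 (Q : ℝ → ℝ) (hQeven : ∀ x, Q (-x) = Q x) (hQnonneg : ∀ x, 0 ≤ Q x)
    (hQmono : AntitoneOn Q (Set.Ici 0))
    (hQint : Integrable Q) (hQnorm : (∫ x, Q x) = 1)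
    (c₀ θ : ℝ) (hc₀ : 0 < c₀) (hθ : 0 < θ)
    (hQdecay : ∀ x : ℝ, 1 ≤ |x| → Q x ≤ c₀ * |x| ^ (-(3 + θ)))
    (α : ℝ) (hα : 0 < α) (τ : ℝ) (hτ0 : 0 < τ) (hτ1 : τ < min θ 1) :
    ∃ κ > (0 : ℝ), ∀ t : ℝ, 1 ≤ t → ∀ k : ℤ, ∀ b : ℝ → ℝ, Measurable b →
      (∀ s ∈ Set.Icc (t / 2) t, b s ∈ Ik t α k) →
      ∑' l : {l : ℤ // 2 ≤ |l - k|}, |((l : ℤ) : ℝ) - (k : ℝ)| ^ τ * vvec Q t α b l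
        ≤ κ * t ^ (-(α * (2 + θ))) := by
  have hτ1' : τ < 1 := lt_of_lt_of_le hτ1 (min_le_right _ _)
  have hSsum : Summable fun n : ℤ => |(n : ℝ)| ^ (-(2 : ℝ)) :=
    Real.summable_abs_int_rpow one_lt_two
  set S : ℝ := ∑' n : ℤ, |(n : ℝ)| ^ (-(2 : ℝ)) with hSdef
  have hSnonneg : 0 ≤ S := tsum_nonneg fun n => Real.rpow_nonneg (abs_nonneg _) _
  refine ⟨2 * c₀ * S + 1, by positivity, ?_⟩
  intro t ht k b hb hloc
  have htpos : (0 : ℝ) < t := lt_of_lt_of_le one_pos ht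
  have htapos : (0 : ℝ) < t ^ α := Real.rpow_pos_of_pos htpos α
  have hta1 : (1 : ℝ) ≤ t ^ α := Real.one_le_rpow ht hα.le
  set p : ℝ := -(α * (2 + θ)) with hpdef
  have htppos : (0 : ℝ) < t ^ p := Real.rpow_pos_of_pos htpos p
  -- nonnegativity of vvec
  have hvnonneg : ∀ l : ℤ, 0 ≤ vvec Q t α b l := by
    intro l
    apply mul_nonneg (by positivity)
    apply intervalIntegral.integral_nonneg (by linarith : t / 2 ≤ t)
    intro s _
    exact setIntegral_nonneg measurableSet_Ico fun x _ => hQnonneg _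
  -- key per-term bound
  have key : ∀ l : ℤ, 2 ≤ |l - k| →
      |((l : ℤ) : ℝ) - (k : ℝ)| ^ τ * vvec Q t α b l ≤
        2 * c₀ * t ^ p * |((l : ℤ) : ℝ) - (k : ℝ)| ^ (-(2 : ℝ)) := by
    intro l hl
    set d : ℝ := |((l : ℤ) : ℝ) - (k : ℝ)| with hddef
    have hd2 : (2 : ℝ) ≤ d := by
      have : ((2 : ℤ) : ℝ) ≤ |((l - k : ℤ) : ℝ)| := by
        rw [← Int.cast_abs]; exact_mod_cast hl
      simpa [hddef, Int.cast_sub, abs_sub_comm] using this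
    have hdpos : (0 : ℝ) < d := by linarith
    -- pointwise bound on Q
    have hpt : ∀ s ∈ Set.Icc (t / 2) t, ∀ x ∈ Ik t α l,
        Q (b s - x) ≤ c₀ * (t ^ α * d) ^ (-(3 + θ)) := by
      intro s hs x hx
      have hbs := hloc s hs
      rw [Ik, Set.mem_Ico] at hbs hx
      have habs : t ^ α * d ≤ |b s - x| := by
        rcases le_or_gt (k : ℝ) (l : ℝ) with hkl | hkl
        · have hdeq : d = (l : ℝ) - (k : ℝ) := abs_of_nonneg (by linarith)
          have h1 : t ^ α * d ≤ x - b s := by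
            have h2 : t ^ α * (2 * (l : ℝ) - 1) ≤ x := hx.1
            have h3 : b s < t ^ α * (2 * (k : ℝ) + 1) := hbs.2
            nlinarith [htapos, hd2, hdeq]
          calc t ^ α * d ≤ x - b s := h1
            _ = -(b s - x) := by ring
            _ ≤ |b s - x| := neg_le_abs _
        · have hdeq : d = (k : ℝ) - (l : ℝ) := by
            rw [hddef, abs_of_nonpos (by linarith)]; ring
          have h1 : t ^ α * d ≤ b s - x := by
            have h2 : t ^ α * (2 * (k : ℝ) - 1) ≤ b s := hbs.1
            have h3 : x < t ^ α * (2 * (l : ℝ) + 1) := hx.2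
            nlinarith [htapos, hd2, hdeq]
          calc t ^ α * d ≤ b s - x := h1
            _ ≤ |b s - x| := le_abs_self _
      have h1le : (1 : ℝ) ≤ |b s - x| := by nlinarith [htapos, hta1, hd2]
      calc Q (b s - x) ≤ c₀ * |b s - x| ^ (-(3 + θ)) := hQdecay _ h1le
        _ ≤ c₀ * (t ^ α * d) ^ (-(3 + θ)) := by
            apply mul_le_mul_of_nonneg_left _ hc₀.le
            exact Real.rpow_le_rpow_of_nonpos (by positivity) habs (by linarith)
    -- inner integral bound
    set M : ℝ := c₀ * (t ^ α * d) ^ (-(3 + θ)) with hMdef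
    have hMnonneg : 0 ≤ M := by positivity
    have hin : ∀ s ∈ Set.Icc (t / 2) t,
        ‖∫ x in Ik t α l, Q (b s - x)‖ ≤ M * (2 * t ^ α) := by
      intro s hs
      have hvol : (volume (Ik t α l)).toReal = 2 * t ^ α := by
        rw [Ik, Real.volume_Ico, ENNReal.toReal_ofReal (by nlinarith [htapos])]
        ring
      have := norm_setIntegral_le_of_norm_le_const (μ := volume)
        (s := Ik t α l) (f := fun x => Q (b s - x)) (C := M)
        (by rw [Ik]; exact measure_Ico_lt_top)
        (fun x hx => by
          rw [Real.norm_eq_abs, abs_of_nonneg (hQnonneg _)]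
          exact hpt s hs x hx)
      rwa [measureReal_def, hvol] at this
    -- outer integral bound
    have hout : ‖∫ s in (t / 2)..t, ∫ x in Ik t α l, Q (b s - x)‖ ≤
        M * (2 * t ^ α) * |t - t / 2| := by
      apply intervalIntegral.norm_integral_le_of_norm_le_const
      intro s hs
      rw [Set.uIoc_of_le (by linarith : t / 2 ≤ t)] at hs
      exact hin s ⟨hs.1.le, hs.2⟩
    have hvv : vvec Q t α b l ≤ 2 * c₀ * t ^ p * d ^ (-(3 + θ)) := by
      have h1 : vvec Q t α b l ≤ (2 / t) * (M * (2 * t ^ α) * |t - t / 2|) := by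
        rw [vvec]
        exact mul_le_mul_of_nonneg_left
          (le_trans (le_abs_self _) hout) (by positivity)
      have h2 : |t - t / 2| = t / 2 := by
        rw [abs_of_nonneg (by linarith)]; ring
      have h3 : (2 / t) * (M * (2 * t ^ α) * |t - t / 2|) =
          2 * c₀ * (t ^ α * (t ^ α * d) ^ (-(3 + θ))) := by
        rw [h2, hMdef]; field_simp
      have h4 : (t ^ α * d) ^ (-(3 + θ)) = (t ^ α) ^ (-(3 + θ)) * d ^ (-(3 + θ)) :=
        Real.mul_rpow htapos.le hdpos.le
      have h5 : t ^ α * (t ^ α) ^ (-(3 + θ)) = t ^ p := by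
        rw [← Real.rpow_mul htpos.le, ← Real.rpow_add htpos]
        congr 1; rw [hpdef]; ring
      calc vvec Q t α b l ≤ (2 / t) * (M * (2 * t ^ α) * |t - t / 2|) := h1
        _ = 2 * c₀ * (t ^ α * (t ^ α) ^ (-(3 + θ)) * d ^ (-(3 + θ))) := by
            rw [h3, h4]; ring
        _ = 2 * c₀ * t ^ p * d ^ (-(3 + θ)) := by rw [h5]; ring
    -- combine with the d^τ factor
    have hdτ : (0 : ℝ) ≤ d ^ τ := Real.rpow_nonneg hdpos.le _
    calc d ^ τ * vvec Q t α b l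
        ≤ d ^ τ * (2 * c₀ * t ^ p * d ^ (-(3 + θ))) :=
          mul_le_mul_of_nonneg_left hvv hdτ
      _ = 2 * c₀ * t ^ p * d ^ (τ + -(3 + θ)) := by
          rw [Real.rpow_add hdpos]; ring
      _ ≤ 2 * c₀ * t ^ p * d ^ (-(2 : ℝ)) := by
          apply mul_le_mul_of_nonneg_left _ (by positivity)
          exact Real.rpow_le_rpow_of_exponent_le (by linarith) (by linarith)
  -- summability over ℤ of the comparison function
  have hZsum : Summable fun l : ℤ => |((l : ℤ) : ℝ) - (k : ℝ)| ^ (-(2 : ℝ)) := by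
    have h := (Equiv.subRight k).summable_iff.mpr hSsum
    refine h.congr fun l => ?_
    simp only [Function.comp, Equiv.subRight_apply]
    push_cast
    ring_nf
  have hgsum : Summable fun l : {l : ℤ // 2 ≤ |l - k|} =>
      2 * c₀ * t ^ p * |((l : ℤ) : ℝ) - (k : ℝ)| ^ (-(2 : ℝ)) :=
    (hZsum.subtype _).mul_left _
  have hfsum : Summable fun l : {l : ℤ // 2 ≤ |l - k|} =>
      |((l : ℤ) : ℝ) - (k : ℝ)| ^ τ * vvec Q t α b l := by
    apply Summable.of_nonneg_of_le (f := fun l : {l : ℤ // 2 ≤ |l - k|} =>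
        2 * c₀ * t ^ p * |((l : ℤ) : ℝ) - (k : ℝ)| ^ (-(2 : ℝ)))
      (fun l => mul_nonneg (Real.rpow_nonneg (abs_nonneg _) _) (hvnonneg _))
      (fun l => key l.1 l.2) hgsum
  calc ∑' l : {l : ℤ // 2 ≤ |l - k|}, |((l : ℤ) : ℝ) - (k : ℝ)| ^ τ * vvec Q t α b l
      ≤ ∑' l : {l : ℤ // 2 ≤ |l - k|},
          2 * c₀ * t ^ p * |((l : ℤ) : ℝ) - (k : ℝ)| ^ (-(2 : ℝ)) :=
        Summable.tsum_le_tsum (fun l => key l.1 l.2) hfsum hgsum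
    _ = 2 * c₀ * t ^ p *
          ∑' l : {l : ℤ // 2 ≤ |l - k|}, |((l : ℤ) : ℝ) - (k : ℝ)| ^ (-(2 : ℝ)) :=
        tsum_mul_left
    _ ≤ 2 * c₀ * t ^ p * ∑' l : ℤ, |((l : ℤ) : ℝ) - (k : ℝ)| ^ (-(2 : ℝ)) := by
        apply mul_le_mul_of_nonneg_left _ (by positivity)
        exact Summable.tsum_subtype_le (fun l : ℤ => |((l : ℤ) : ℝ) - (k : ℝ)| ^ (-(2 : ℝ)))
          {l : ℤ | 2 ≤ |l - k|} (fun l => Real.rpow_nonneg (abs_nonneg _) _) hZsum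
    _ = 2 * c₀ * t ^ p * S := by
        congr 1
        rw [hSdef, ← (Equiv.subRight k).tsum_eq (fun n : ℤ => |(n : ℝ)| ^ (-(2 : ℝ)))]
        apply tsum_congr
        intro l
        simp only [Equiv.subRight_apply]
        push_cast
        ring_nf
    _ ≤ (2 * c₀ * S + 1) * t ^ p := by nlinarith [htppos, hSnonneg, hc₀]
end

section
/- Let τ ∈ (0,1), k ∈ ℤ and ε ≥ 0, and let A : ℤ × ℤ → ℝ satisfy A_{ii} = 0 for every i, and for every j ∈ ℤ both Σ_{i ≠ j} |A_{ij}| |i - j|^τ ≤ ε and Σ_{i ≠ j} |A_{ji}| |i - j|^τ ≤ ε. Then for every x ∈ l_{τ,k}, the series (Ax)_i = Σ_{j ∈ ℤ} A_{ij} x_j converges absolutely for every i ∈ ℤ, the sequence Ax belongs to l_{τ,k}, and ‖Ax‖_{τ,k} ≤ 3ε ‖x‖_{τ,k}. -/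
open MeasureTheory

/-- The weighted norm `‖x‖_{τ,k} = |x_k| + Σ_{i ≠ k} |x_i| |i - k|^τ`. -/
noncomputable def wnorm (τ : ℝ) (k : ℤ) (x : ℤ → ℝ) : ℝ :=
  |x k| + ∑' i : {i : ℤ // i ≠ k}, |x i| * |((i : ℤ) : ℝ) - (k : ℝ)| ^ τ

/-- Membership in the weighted sequence space `l_{τ,k}`. -/
def memL (τ : ℝ) (k : ℤ) (x : ℤ → ℝ) : Prop :=
  Summable (fun i : {i : ℤ // i ≠ k} => |x i| * |((i : ℤ) : ℝ) - (k : ℝ)| ^ τ)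

lemma my_rpow_add_le {τ a b : ℝ} (hτ0 : 0 ≤ τ) (hτ1 : τ ≤ 1) (ha : 0 ≤ a) (hb : 0 ≤ b) :
    (a + b) ^ τ ≤ a ^ τ + b ^ τ := by
  lift a to NNReal using ha
  lift b to NNReal using hb
  exact_mod_cast NNReal.rpow_add_le_add_rpow a b hτ0 hτ1

lemma my_one_le_rpow {τ : ℝ} (hτ : 0 < τ) {i j : ℤ} (h : i ≠ j) :
    1 ≤ |(i : ℝ) - (j : ℝ)| ^ τ := by
  have h1 : (1 : ℝ) ≤ |(i : ℝ) - (j : ℝ)| := by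
    have : (1 : ℤ) ≤ |i - j| := Int.one_le_abs (sub_ne_zero.mpr h)
    calc (1:ℝ) ≤ ((|i - j| : ℤ) : ℝ) := by exact_mod_cast this
    _ = |(i : ℝ) - (j : ℝ)| := by push_cast; ring_nf
  calc (1:ℝ) = 1 ^ τ := (Real.one_rpow τ).symm
  _ ≤ |(i : ℝ) - (j : ℝ)| ^ τ := Real.rpow_le_rpow zero_le_one h1 hτ.le

lemma my_subtype_summable_iff (j : ℤ) (f : ℤ → ℝ) :
    Summable (fun i : {i : ℤ // i ≠ j} => f i) ↔
      Summable (fun i : ℤ => if i = j then 0 else f i) := by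
  have hind : (fun i : ℤ => if i = j then 0 else f i) = ({i : ℤ | i ≠ j}).indicator f := by
    funext i
    by_cases hi : i = j <;> simp [Set.indicator_apply, hi]
  rw [hind]
  exact summable_subtype_iff_indicator (s := {i : ℤ | i ≠ j}) (f := f)

lemma my_subtype_tsum (j : ℤ) (f : ℤ → ℝ) :
    (∑' i : {i : ℤ // i ≠ j}, f i) = ∑' i : ℤ, if i = j then 0 else f i := by
  have hind : (fun i : ℤ => if i = j then 0 else f i) = ({i : ℤ | i ≠ j}).indicator f := by
    funext i
    by_cases hi : i = j <;> simp [Set.indicator_apply, hi]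
  rw [hind]
  exact tsum_subtype {i : ℤ | i ≠ j} f

lemma my_full_summable (j : ℤ) (f : ℤ → ℝ)
    (h : Summable (fun i : {i : ℤ // i ≠ j} => f i)) : Summable f := by
  have h1 := (my_subtype_summable_iff j f).mp h
  have h2 : Summable (fun i : ℤ => if i = j then f j else 0) :=
    summable_of_ne_finset_zero (s := {j}) (by intro i hi; simp at hi; simp [hi])
  have h3 := h1.add h2
  refine h3.congr fun i => ?_
  by_cases hi : i = j <;> simp [hi]

lemma my_full_tsum (j : ℤ) (f : ℤ → ℝ)
    (h : Summable (fun i : {i : ℤ // i ≠ j} => f i)) :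
    ∑' i : ℤ, f i = f j + ∑' i : {i : ℤ // i ≠ j}, f i := by
  rw [my_subtype_tsum]
  exact Summable.tsum_eq_add_tsum_ite (my_full_summable j f h) j

/-- Weight function : `Wt τ k i = 1` if `i = k`, else `|i-k|^τ`. -/
noncomputable def Wt (τ : ℝ) (k : ℤ) (i : ℤ) : ℝ :=
  if i = k then 1 else |(i : ℝ) - (k : ℝ)| ^ τ

lemma Wt_one_le {τ : ℝ} (hτ : 0 < τ) (k i : ℤ) : 1 ≤ Wt τ k i := by
  unfold Wt
  by_cases h : i = k
  · simp [h]
  · simpa [h] using my_one_le_rpow hτ h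

lemma Wt_nonneg {τ : ℝ} (hτ : 0 < τ) (k i : ℤ) : 0 ≤ Wt τ k i :=
  zero_le_one.trans (Wt_one_le hτ k i)

lemma Wt_le {τ : ℝ} (hτ0 : 0 < τ) (hτ1 : τ < 1) (k : ℤ) {i j : ℤ} (hij : i ≠ j) :
    Wt τ k i ≤ |(i : ℝ) - (j : ℝ)| ^ τ + Wt τ k j := by
  by_cases hjk : j = k
  · subst hjk
    have e1 : Wt τ j i = |(i : ℝ) - (j : ℝ)| ^ τ := by simp [Wt, hij]
    have e2 : Wt τ j j = 1 := by simp [Wt]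
    rw [e1, e2]
    linarith
  · by_cases hik : i = k
    · subst hik
      have h1 : 1 ≤ |(i : ℝ) - (j : ℝ)| ^ τ := my_one_le_rpow hτ0 hij
      have h0 := Wt_nonneg hτ0 i j
      have e1 : Wt τ i i = 1 := by simp [Wt]
      rw [e1]
      linarith
    · have htri : |(i : ℝ) - (k : ℝ)| ≤ |(i : ℝ) - (j : ℝ)| + |(j : ℝ) - (k : ℝ)| :=
        abs_sub_le _ _ _
      have h1 : |(i : ℝ) - (k : ℝ)| ^ τ ≤ (|(i : ℝ) - (j : ℝ)| + |(j : ℝ) - (k : ℝ)|) ^ τ :=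
        Real.rpow_le_rpow (abs_nonneg _) htri hτ0.le
      have h2 := my_rpow_add_le hτ0.le hτ1.le (abs_nonneg ((i : ℝ) - (j : ℝ)))
        (abs_nonneg ((j : ℝ) - (k : ℝ)))
      have e1 : Wt τ k i = |(i : ℝ) - (k : ℝ)| ^ τ := by simp [Wt, hik]
      have e2 : Wt τ k j = |(j : ℝ) - (k : ℝ)| ^ τ := by simp [Wt, hjk]
      rw [e1, e2]
      linarith

lemma my_memL_iff (τ : ℝ) (hτ0 : 0 < τ) (k : ℤ) (x : ℤ → ℝ) :
    memL τ k x ↔ Summable (fun i : ℤ => |x i| * Wt τ k i) := by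
  unfold memL
  have hcongr : ∀ i : {i : ℤ // i ≠ k},
      |x i| * |((i : ℤ) : ℝ) - (k : ℝ)| ^ τ = |x (i : ℤ)| * Wt τ k (i : ℤ) := by
    intro i; simp [Wt, i.2]
  constructor
  · intro h
    exact my_full_summable k _ (h.congr hcongr)
  · intro h
    have h1 : Summable (fun i : ℤ => if i = k then 0 else |x i| * Wt τ k i) := by
      refine h.of_nonneg_of_le (fun i => ?_) (fun i => ?_)
      · split_ifs with hi
        · exact le_refl 0
        · exact mul_nonneg (abs_nonneg _) (Wt_nonneg hτ0 k i)
      · split_ifs with hi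
        · exact mul_nonneg (abs_nonneg _) (Wt_nonneg hτ0 k i)
        · exact le_refl _
    exact ((my_subtype_summable_iff k _).mpr h1).congr fun i => (hcongr i).symm

lemma my_wnorm_eq (τ : ℝ) (hτ0 : 0 < τ) (k : ℤ) (x : ℤ → ℝ)
    (h : memL τ k x) :
    wnorm τ k x = ∑' i : ℤ, |x i| * Wt τ k i := by
  have hcongr : ∀ i : {i : ℤ // i ≠ k},
      |x i| * |((i : ℤ) : ℝ) - (k : ℝ)| ^ τ = |x (i : ℤ)| * Wt τ k (i : ℤ) := by
    intro i; simp [Wt, i.2]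
  rw [my_full_tsum k (fun i => |x i| * Wt τ k i) (h.congr hcongr)]
  unfold wnorm
  congr 1
  · simp [Wt]
  · exact tsum_congr hcongr

theorem stmt11 (τ : ℝ) (hτ0 : 0 < τ) (hτ1 : τ < 1) (k : ℤ) (ε : ℝ) (hε : 0 ≤ ε)
    (A : ℤ → ℤ → ℝ) (hdiag : ∀ i, A i i = 0)
    (hcolS : ∀ j : ℤ, Summable (fun i : {i : ℤ // i ≠ j} =>
      |A i j| * |((i : ℤ) : ℝ) - (j : ℝ)| ^ τ))
    (hcol : ∀ j : ℤ, (∑' i : {i : ℤ // i ≠ j},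
      |A i j| * |((i : ℤ) : ℝ) - (j : ℝ)| ^ τ) ≤ ε)
    (hrowS : ∀ j : ℤ, Summable (fun i : {i : ℤ // i ≠ j} =>
      |A j i| * |((i : ℤ) : ℝ) - (j : ℝ)| ^ τ))
    (hrow : ∀ j : ℤ, (∑' i : {i : ℤ // i ≠ j},
      |A j i| * |((i : ℤ) : ℝ) - (j : ℝ)| ^ τ) ≤ ε)
    (x : ℤ → ℝ) (hx : memL τ k x) :
    (∀ i : ℤ, Summable (fun j : ℤ => |A i j * x j|)) ∧
    memL τ k (fun i : ℤ => ∑' j : ℤ, A i j * x j) ∧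
    wnorm τ k (fun i : ℤ => ∑' j : ℤ, A i j * x j) ≤ 3 * ε * wnorm τ k x := by
  classical
  have hxZ : Summable (fun i : ℤ => |x i| * Wt τ k i) := (my_memL_iff τ hτ0 k x).mp hx
  have hwx : wnorm τ k x = ∑' i : ℤ, |x i| * Wt τ k i := my_wnorm_eq τ hτ0 k x hx
  have hB0 : 0 ≤ wnorm τ k x := by
    rw [hwx]
    exact tsum_nonneg fun i => mul_nonneg (abs_nonneg _) (Wt_nonneg hτ0 k i)
  have hxB : ∀ j : ℤ, |x j| ≤ wnorm τ k x := by
    intro j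
    rw [hwx]
    calc |x j| ≤ |x j| * Wt τ k j := le_mul_of_one_le_right (abs_nonneg _) (Wt_one_le hτ0 k j)
    _ ≤ ∑' i : ℤ, |x i| * Wt τ k i :=
        Summable.le_tsum hxZ j fun i _ => mul_nonneg (abs_nonneg _) (Wt_nonneg hτ0 k i)
  -- Part 1
  have part1 : ∀ i : ℤ, Summable (fun j : ℤ => |A i j * x j|) := by
    intro i
    have hg : Summable (fun j : ℤ =>
        if j = i then 0 else wnorm τ k x * (|A i j| * |(j : ℝ) - (i : ℝ)| ^ τ)) :=
      (my_subtype_summable_iff i _).mp ((hrowS i).mul_left (wnorm τ k x))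
    refine Summable.of_nonneg_of_le (fun j => abs_nonneg _) (fun j => ?_) hg
    by_cases hj : j = i
    · subst hj; simp [hdiag]
    · rw [if_neg hj, abs_mul]
      have h1 := my_one_le_rpow hτ0 hj
      have h2 := hxB j
      nlinarith [abs_nonneg (A i j), abs_nonneg (x j),
        mul_le_mul_of_nonneg_left h2 (abs_nonneg (A i j)),
        mul_nonneg (mul_nonneg hB0 (abs_nonneg (A i j))) (sub_nonneg.mpr h1)]
  -- column bound
  have colb : ∀ j : ℤ, Summable (fun i : ℤ => |A i j| * Wt τ k i) ∧
      (∑' i : ℤ, |A i j| * Wt τ k i) ≤ 3 * ε * Wt τ k j := by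
    intro j
    have hub : ∀ i : ℤ, |A i j| * Wt τ k i ≤
        (if i = j then 0 else (1 + Wt τ k j) * (|A i j| * |(i : ℝ) - (j : ℝ)| ^ τ)) := by
      intro i
      by_cases hij : i = j
      · subst hij; simp [hdiag]
      · rw [if_neg hij]
        have h1 := Wt_le hτ0 hτ1 k hij
        have h2 := my_one_le_rpow hτ0 hij
        have h3 := Wt_nonneg hτ0 k j
        nlinarith [abs_nonneg (A i j),
          mul_le_mul_of_nonneg_left h1 (abs_nonneg (A i j)),
          mul_nonneg (mul_nonneg (abs_nonneg (A i j)) h3)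
            (sub_nonneg.mpr h2)]
    have hcs : Summable (fun i : ℤ =>
        if i = j then 0 else |A i j| * |(i : ℝ) - (j : ℝ)| ^ τ) :=
      (my_subtype_summable_iff j _).mp (hcolS j)
    have hg : Summable (fun i : ℤ =>
        if i = j then 0 else (1 + Wt τ k j) * (|A i j| * |(i : ℝ) - (j : ℝ)| ^ τ)) :=
      (my_subtype_summable_iff j _).mp ((hcolS j).mul_left _)
    have hS : Summable (fun i : ℤ => |A i j| * Wt τ k i) :=
      Summable.of_nonneg_of_le
        (fun i => mul_nonneg (abs_nonneg _) (Wt_nonneg hτ0 k i)) hub hg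
    refine ⟨hS, ?_⟩
    have h4 : (∑' i : ℤ, |A i j| * Wt τ k i) ≤
        ∑' i : ℤ, (if i = j then 0 else (1 + Wt τ k j) * (|A i j| * |(i : ℝ) - (j : ℝ)| ^ τ)) :=
      Summable.tsum_le_tsum hub hS hg
    have h5 : (∑' i : ℤ, (if i = j then 0 else
          (1 + Wt τ k j) * (|A i j| * |(i : ℝ) - (j : ℝ)| ^ τ)))
        = (1 + Wt τ k j) * ∑' i : ℤ,
            (if i = j then 0 else |A i j| * |(i : ℝ) - (j : ℝ)| ^ τ) := by
      rw [← hcs.tsum_mul_left (1 + Wt τ k j)]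
      refine tsum_congr fun i => ?_
      split_ifs <;> ring
    have h6 : (∑' i : ℤ, (if i = j then 0 else |A i j| * |(i : ℝ) - (j : ℝ)| ^ τ)) ≤ ε := by
      rw [← my_subtype_tsum]; exact hcol j
    have hWj := Wt_one_le hτ0 k j
    have h7 : (1 + Wt τ k j) * (∑' i : ℤ,
        (if i = j then 0 else |A i j| * |(i : ℝ) - (j : ℝ)| ^ τ)) ≤ (1 + Wt τ k j) * ε :=
      mul_le_mul_of_nonneg_left h6 (by linarith)
    have h8 : (1 + Wt τ k j) * ε ≤ 3 * ε * Wt τ k j := by nlinarith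
    linarith [h4, h5 ▸ h7]
  -- double sums
  set F : ℤ × ℤ → ℝ := fun p => |x p.1| * (|A p.2 p.1| * Wt τ k p.2) with hFdef
  have hF0 : 0 ≤ F := fun p =>
    mul_nonneg (abs_nonneg _) (mul_nonneg (abs_nonneg _) (Wt_nonneg hτ0 k _))
  have hFrow : ∀ j : ℤ, Summable (fun i : ℤ => F (j, i)) := fun j =>
    ((colb j).1).mul_left |x j|
  have hFsum1 : ∀ j : ℤ, (∑' i : ℤ, F (j, i)) = |x j| * ∑' i : ℤ, |A i j| * Wt τ k i :=
    fun j => (colb j).1.tsum_mul_left |x j|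
  have hFmargle : ∀ j : ℤ, (∑' i : ℤ, F (j, i)) ≤ 3 * ε * (|x j| * Wt τ k j) := by
    intro j
    rw [hFsum1 j]
    calc |x j| * ∑' i : ℤ, |A i j| * Wt τ k i ≤ |x j| * (3 * ε * Wt τ k j) :=
      mul_le_mul_of_nonneg_left (colb j).2 (abs_nonneg _)
    _ = 3 * ε * (|x j| * Wt τ k j) := by ring
  have hFmarg : Summable (fun j : ℤ => ∑' i : ℤ, F (j, i)) := by
    refine Summable.of_nonneg_of_le (fun j => tsum_nonneg fun i => hF0 (j, i))
      hFmargle (hxZ.mul_left (3 * ε))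
  have hFS : Summable F := (summable_prod_of_nonneg hF0).mpr ⟨hFrow, hFmarg⟩
  set G : ℤ × ℤ → ℝ := fun p => Wt τ k p.1 * (|A p.1 p.2| * |x p.2|) with hGdef
  have hG0 : 0 ≤ G := fun p =>
    mul_nonneg (Wt_nonneg hτ0 k _) (mul_nonneg (abs_nonneg _) (abs_nonneg _))
  have hGS : Summable G := by
    have h1 : Summable (F ∘ (Equiv.prodComm ℤ ℤ)) :=
      ((Equiv.prodComm ℤ ℤ).summable_iff).mpr hFS
    refine h1.congr fun p => ?_
    simp only [Function.comp_apply, Equiv.prodComm_apply, Prod.swap, hFdef, hGdef]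
    ring
  obtain ⟨hGrow, hGmarg⟩ := (summable_prod_of_nonneg hG0).mp hGS
  -- bound |y i| by row sums
  have hyabs : ∀ i : ℤ, |∑' j : ℤ, A i j * x j| ≤ ∑' j : ℤ, |A i j * x j| := by
    intro i
    have h1 : Summable fun j : ℤ => ‖A i j * x j‖ := by
      simpa only [Real.norm_eq_abs] using part1 i
    simpa only [Real.norm_eq_abs] using norm_tsum_le_tsum_norm h1
  have hGsum1 : ∀ i : ℤ, (∑' j : ℤ, G (i, j)) = Wt τ k i * ∑' j : ℤ, |A i j * x j| := by
    intro i
    rw [← (part1 i).tsum_mul_left (Wt τ k i)]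
    refine tsum_congr fun j => ?_
    simp [hGdef, abs_mul]
  have hyb : ∀ i : ℤ, |∑' j : ℤ, A i j * x j| * Wt τ k i ≤ ∑' j : ℤ, G (i, j) := by
    intro i
    rw [hGsum1 i]
    calc |∑' j : ℤ, A i j * x j| * Wt τ k i ≤ (∑' j : ℤ, |A i j * x j|) * Wt τ k i :=
      mul_le_mul_of_nonneg_right (hyabs i) (Wt_nonneg hτ0 k i)
    _ = Wt τ k i * ∑' j : ℤ, |A i j * x j| := by ring
  have hyZ : Summable (fun i : ℤ => |∑' j : ℤ, A i j * x j| * Wt τ k i) :=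
    Summable.of_nonneg_of_le
      (fun i => mul_nonneg (abs_nonneg _) (Wt_nonneg hτ0 k i)) hyb hGmarg
  have hmemy : memL τ k (fun i : ℤ => ∑' j : ℤ, A i j * x j) :=
    (my_memL_iff τ hτ0 k _).mpr hyZ
  refine ⟨part1, hmemy, ?_⟩
  rw [my_wnorm_eq τ hτ0 k _ hmemy, hwx]
  calc (∑' i : ℤ, |∑' j : ℤ, A i j * x j| * Wt τ k i)
      ≤ ∑' i : ℤ, ∑' j : ℤ, G (i, j) := Summable.tsum_le_tsum hyb hyZ hGmarg
    _ = ∑' p : ℤ × ℤ, G p := (Summable.tsum_prod' hGS hGrow).symm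
    _ = ∑' p : ℤ × ℤ, F p := by
        rw [← (Equiv.prodComm ℤ ℤ).tsum_eq F]
        refine tsum_congr fun p => ?_
        simp only [Equiv.prodComm_apply, Prod.swap, hFdef, hGdef]
        ring
    _ = ∑' j : ℤ, ∑' i : ℤ, F (j, i) := Summable.tsum_prod' hFS hFrow
    _ ≤ ∑' j : ℤ, 3 * ε * (|x j| * Wt τ k j) :=
        Summable.tsum_le_tsum hFmargle hFmarg (hxZ.mul_left (3 * ε))
    _ = 3 * ε * ∑' j : ℤ, |x j| * Wt τ k j := tsum_mul_left
end

section
/- Let α ∈ (3/7, 1), τ > 0, K > 0 and M ∈ ℕ. For each t > 0, let (η_j^{(t)})_{j ∈ ℤ} be real random variables on a probability space (Ω, P) such that for every j ∈ ℤ the law of η_j^{(t)} is a centered Gaussian measure on ℝ with variance at most K t^{1-α}. Then lim_{t → ∞} P( there exist ℓ ∈ {-M, …, M} and j ∈ ℤ with j ≠ ℓ such that |η_j^{(t)}| ≥ |j - ℓ|^τ t^{3α - 1} ) = 0. -/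
open MeasureTheory ProbabilityTheory Filter

section helpers
open Real Set

lemma gauss_tail_Ici (v : NNReal) (hv : v ≠ 0) {c : ℝ} (hc : 0 < c) :
    gaussianReal 0 v (Set.Ici c) ≤
      ENNReal.ofReal (4 * Real.sqrt v / c * Real.exp (-c ^ 2 / (4 * v))) := by
  have hv0 : (0:ℝ) < (v:ℝ) := by positivity
  rw [gaussianReal_apply_eq_integral 0 hv]
  apply ENNReal.ofReal_le_ofReal
  have hb : (0:ℝ) < c / (4 * v) := by positivity
  set b : ℝ := c / (4 * v) with hbdef
  set A : ℝ := (Real.sqrt (2 * π * v))⁻¹ with hA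
  have hA0 : 0 < A := by
    rw [hA]
    have : (0:ℝ) < 2 * π * v := by positivity
    positivity
  -- pointwise bound on Ici c
  have hpt : ∀ x ∈ Ici c, gaussianPDFReal 0 v x ≤ (A * Real.exp (-c^2/(4*v))) * Real.exp (-(b * x)) := by
    intro x hx
    simp only [mem_Ici] at hx
    have hx0 : 0 ≤ x := hc.le.trans hx
    have key : -x^2/(2*(v:ℝ)) ≤ -c^2/(4*(v:ℝ)) + -(b*x) := by
      rw [hbdef]
      have e1 : -x^2/(2*(v:ℝ)) = -(2*x^2)/(4*(v:ℝ)) := by ring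
      have e2 : -c^2/(4*(v:ℝ)) + -((c/(4*(v:ℝ)))*x) = -(c^2 + c*x)/(4*(v:ℝ)) := by ring
      rw [e1, e2, div_le_div_iff_of_pos_right (by positivity : (0:ℝ) < 4*(v:ℝ))]
      nlinarith
    calc gaussianPDFReal 0 v x = A * Real.exp (-x^2/(2*(v:ℝ))) := by
          unfold gaussianPDFReal; rw [sub_zero]
      _ ≤ A * Real.exp (-c^2/(4*(v:ℝ)) + -(b*x)) :=
          mul_le_mul_of_nonneg_left (Real.exp_le_exp.mpr key) hA0.le
      _ = (A * Real.exp (-c^2/(4*(v:ℝ)))) * Real.exp (-(b*x)) := by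
          rw [Real.exp_add, mul_assoc]
  -- integrability of the dominating function on Ici c
  have hint : IntegrableOn (fun x => (A * Real.exp (-c^2/(4*(v:ℝ)))) * Real.exp (-(b * x))) (Ici c) := by
    apply Integrable.const_mul
    have := exp_neg_integrableOn_Ioi c hb
    exact (by simpa [mul_comm] using this.congr_set_ae Ioi_ae_eq_Ici.symm : IntegrableOn (fun x => Real.exp (-(b * x))) (Ici c))
  have hmono : ∫ x in Ici c, gaussianPDFReal 0 v x
      ≤ ∫ x in Ici c, (A * Real.exp (-c^2/(4*(v:ℝ)))) * Real.exp (-(b * x)) := by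
    apply setIntegral_mono_on (integrable_gaussianPDFReal 0 v).integrableOn hint measurableSet_Ici hpt
  refine hmono.trans ?_
  -- compute the integral
  have hcalc : ∫ x in Ici c, Real.exp (-(b * x)) = b⁻¹ * Real.exp (-(b*c)) := by
    rw [setIntegral_congr_set Ioi_ae_eq_Ici.symm]
    have := integral_comp_mul_left_Ioi (fun y => Real.exp (-y)) c hb
    simp only [smul_eq_mul] at this
    rw [this, integral_exp_neg_Ioi]
  rw [integral_const_mul, hcalc]
  -- final arithmetic
  have hsq : A * b⁻¹ ≤ 4 * Real.sqrt v / c := by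
    rw [hA, hbdef, inv_div]
    have h1 : Real.sqrt v ≤ Real.sqrt (2 * π * v) := by
      apply Real.sqrt_le_sqrt
      nlinarith [Real.pi_gt_three]
    have h2 : (0:ℝ) < Real.sqrt v := Real.sqrt_pos.mpr hv0
    have h3 : (0:ℝ) < Real.sqrt (2*π*v) := lt_of_lt_of_le h2 h1
    calc (√(2*π*↑v))⁻¹ * (4*↑v/c) ≤ (√↑v)⁻¹ * (4*↑v/c) := by gcongr
      _ = 4 * √↑v / c := by
          field_simp
          nlinarith [Real.mul_self_sqrt hv0.le]
  have hexple : Real.exp (-(b*c)) ≤ 1 := Real.exp_le_one_iff.mpr (by nlinarith)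
  calc A * Real.exp (-c^2/(4*(v:ℝ))) * (b⁻¹ * Real.exp (-(b*c)))
      = (A * b⁻¹) * Real.exp (-c^2/(4*(v:ℝ))) * Real.exp (-(b*c)) := by ring
    _ ≤ (4 * Real.sqrt v / c) * Real.exp (-c^2/(4*(v:ℝ))) * 1 := by
        apply mul_le_mul (mul_le_mul_of_nonneg_right hsq (Real.exp_nonneg _)) hexple (Real.exp_nonneg _)
        positivity
    _ = 4 * Real.sqrt v / c * Real.exp (-c^2/(4*(v:ℝ))) := by ring

lemma gauss_tail (v : NNReal) {V c : ℝ} (hvV : (v:ℝ) ≤ V) (hV : 0 < V) (hc : 0 < c) :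
    gaussianReal 0 v {x : ℝ | c ≤ |x|} ≤
      ENNReal.ofReal (8 * Real.sqrt V / c * Real.exp (-c ^ 2 / (4 * V))) := by
  have hsplit : {x : ℝ | c ≤ |x|} = Iic (-c) ∪ Ici c := by
    ext x
    simp only [mem_setOf_eq, mem_union, mem_Iic, mem_Ici, le_abs, le_neg]
    tauto
  by_cases hv : v = 0
  · rw [hv, gaussianReal_zero_var, hsplit]
    refine le_trans (measure_union_le _ _) ?_
    rw [Measure.dirac_apply' _ measurableSet_Iic, Measure.dirac_apply' _ measurableSet_Ici]
    have h1 : (0:ℝ) ∉ Iic (-c) := by simp [mem_Iic]; linarith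
    have h2 : (0:ℝ) ∉ Ici c := by simp [mem_Ici]; linarith
    rw [Set.indicator_of_notMem h1, Set.indicator_of_notMem h2]
    simp
  · have hv0 : (0:ℝ) < (v:ℝ) := by positivity
    have hneg : gaussianReal 0 v (Iic (-c)) = gaussianReal 0 v (Ici c) := by
      have hmap := gaussianReal_map_const_mul (μ := 0) (v := v) (-1)
      rw [mul_zero] at hmap
      have : gaussianReal 0 v (Iic (-c)) = (Measure.map (fun x => -1*x) (gaussianReal 0 v)) (Ici c) := by
        rw [Measure.map_apply (by fun_prop) measurableSet_Ici]
        congr 1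
        ext x
        simp only [mem_preimage, mem_Ici, mem_Iic, neg_mul, one_mul, le_neg]
      rw [this, show (fun x : ℝ => -1*x) = ((-1 : ℝ) * ·) from rfl, hmap]
      congr 1
      ext
      norm_num
    rw [hsplit]
    refine le_trans (measure_union_le _ _) ?_
    rw [hneg]
    refine le_trans (add_le_add (gauss_tail_Ici v hv hc) (gauss_tail_Ici v hv hc)) ?_
    rw [← ENNReal.ofReal_add (by positivity) (by positivity)]
    apply ENNReal.ofReal_le_ofReal
    have h1 : Real.sqrt v ≤ Real.sqrt V := Real.sqrt_le_sqrt hvV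
    have h2 : Real.exp (-c^2/(4*(v:ℝ))) ≤ Real.exp (-c^2/(4*V)) := by
      apply Real.exp_le_exp.mpr
      rw [neg_div, neg_div, neg_le_neg_iff]
      gcongr
    calc 4*√v/c*Real.exp (-c^2/(4*(v:ℝ))) + 4*√v/c*Real.exp (-c^2/(4*(v:ℝ)))
        = 8*√v/c*Real.exp (-c^2/(4*(v:ℝ))) := by ring
      _ ≤ 8*√V/c*Real.exp (-c^2/(4*V)) := by
          apply mul_le_mul (by gcongr) h2 (Real.exp_nonneg _) (by positivity)


lemma summable_exp_nat (a p : ℝ) (ha : 0 < a) (hp : 0 < p) :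
    Summable (fun n : ℕ => Real.exp (-((n:ℝ) ^ p * a))) := by
  set m : ℕ := ⌈p⁻¹⌉₊ + 1 with hm_def
  have hm : 1 < p * m := by
    have h1 : p⁻¹ < (m:ℝ) := by
      rw [hm_def]
      push_cast
      exact lt_of_le_of_lt (Nat.le_ceil _) (lt_add_one _)
    calc (1:ℝ) = p * p⁻¹ := (mul_inv_cancel₀ hp.ne').symm
      _ < p * m := by gcongr
  rw [← summable_nat_add_iff 1]
  have hsum : Summable (fun n : ℕ => ((m.factorial : ℝ) / a^m) * ((((n:ℝ)+1)) ^ (p*m))⁻¹) := by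
    apply Summable.mul_left
    have := (summable_nat_add_iff 1).mpr (Real.summable_nat_rpow_inv.mpr hm)
    simpa using this
  apply Summable.of_nonneg_of_le (fun n => (Real.exp_pos _).le) _ hsum
  intro n
  set x : ℝ := (n:ℝ) + 1 with hx_def
  have hx0 : (0:ℝ) < x := by positivity
  have hx1 : (1:ℝ) ≤ x := by simp [hx_def]
  have hxp : (0:ℝ) < x ^ p := Real.rpow_pos_of_pos hx0 p
  have hpow : (x ^ p * a)^m / m.factorial ≤ Real.exp (x^p * a) :=
    Real.pow_div_factorial_le_exp (x := x^p*a) (by positivity) m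
  have hxq : (x ^ p)^m = x^(p*(m:ℝ)) := by
    rw [← Real.rpow_natCast (x^p) m, ← Real.rpow_mul hx0.le]
  have hy : (0:ℝ) < (x^p*a)^m / m.factorial := by positivity
  have hcast : (((n+1:ℕ)):ℝ) = x := by push_cast [hx_def]; ring
  rw [hcast, Real.exp_neg]
  calc (Real.exp (x^p*a))⁻¹ ≤ ((x^p*a)^m / m.factorial)⁻¹ := by
        apply inv_anti₀ hy hpow
    _ = ((m.factorial : ℝ) / a^m) * (x ^ (p*(m:ℝ)))⁻¹ := by
        rw [← hxq, mul_pow]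
        field_simp
  -- note: p*(m:ℝ) vs p*m coercion should match

lemma summable_exp_int (a p : ℝ) (ha : 0 < a) (hp : 0 < p) :
    Summable (fun k : ℤ => Real.exp (-(|(k:ℝ)| ^ p * a))) := by
  apply Summable.of_nat_of_neg
  · have := summable_exp_nat a p ha hp
    apply this.congr
    intro n
    norm_num
  · have := summable_exp_nat a p ha hp
    apply this.congr
    intro n
    norm_num

end helpers

open Real Set in
theorem stmt14 {Ω : Type*} [MeasurableSpace Ω] (P : Measure Ω) [IsProbabilityMeasure P]
    (α τ K : ℝ) (hα1 : 3 / 7 < α) (hα2 : α < 1) (hτ : 0 < τ) (hK : 0 < K) (M : ℕ)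
    (η : ℝ → ℤ → Ω → ℝ) (hmeas : ∀ t j, Measurable (η t j))
    (hlaw : ∀ t : ℝ, 0 < t → ∀ j : ℤ, ∃ v : NNReal, (v : ℝ) ≤ K * t ^ ((1 : ℝ) - α) ∧
      Measure.map (η t j) P = gaussianReal 0 v) :
    Tendsto (fun t : ℝ =>
        P {ω | ∃ l : ℤ, |l| ≤ (M : ℤ) ∧ ∃ j : ℤ, j ≠ l ∧
          |((j : ℝ)) - (l : ℝ)| ^ τ * t ^ (3 * α - 1) ≤ |η t j ω|})
      atTop (nhds 0) := by
  set b : ℝ := 3 * α - 1 with hb_def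
  set e : ℝ := 7 * α - 3 with he_def
  set p : ℝ := 2 * τ with hp_def
  have hb : 0 < b := by rw [hb_def]; linarith
  have he : 0 < e := by rw [he_def]; linarith
  have hp : 0 < p := by rw [hp_def]; linarith
  set a : ℝ := (8 * K)⁻¹ with ha_def
  have ha : 0 < a := by rw [ha_def]; positivity
  have hsumm := summable_exp_int a p ha hp
  set C : ENNReal := ENNReal.ofReal (∑' k : ℤ, Real.exp (-(|(k:ℝ)| ^ p * a))) with hC_def
  have hC_eq : ∑' k : ℤ, ENNReal.ofReal (Real.exp (-(|(k:ℝ)| ^ p * a))) = C :=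
    (ENNReal.ofReal_tsum_of_nonneg (fun k => (Real.exp_pos _).le) hsumm).symm
  have hC_ne : C ≠ ⊤ := ENNReal.ofReal_ne_top
  set B : ENNReal := ((Finset.Icc (-(M:ℤ)) (M:ℤ)).card : ENNReal) * C with hB_def
  have hB_ne : B ≠ ⊤ := ENNReal.mul_ne_top (ENNReal.natCast_ne_top _) hC_ne
  set D : ℝ → ENNReal :=
    fun t => ENNReal.ofReal (8 * Real.sqrt K * Real.exp (-(t ^ e / (8 * K)))) with hD_def
  -- per event bound
  have key : ∀ t : ℝ, 1 ≤ t → ∀ l j : ℤ,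
      P {ω | j ≠ l ∧ |((j : ℝ)) - (l : ℝ)| ^ τ * t ^ b ≤ |η t j ω|}
        ≤ D t * ENNReal.ofReal (Real.exp (-(|((j:ℝ)) - (l:ℝ)| ^ p * a))) := by
    intro t ht l j
    by_cases hjl : j = l
    · have hempty : {ω | j ≠ l ∧ |((j : ℝ)) - (l : ℝ)| ^ τ * t ^ b ≤ |η t j ω|} = ∅ := by
        ext ω; simp [hjl]
      rw [hempty, measure_empty]
      exact zero_le
    · have ht0 : (0:ℝ) < t := lt_of_lt_of_le one_pos ht
      set n : ℝ := |(j:ℝ) - (l:ℝ)| with hn_def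
      have hn : (1:ℝ) ≤ n := by
        rw [hn_def]
        have h1 : (1:ℤ) ≤ |j - l| := Int.one_le_abs (sub_ne_zero.mpr hjl)
        calc (1:ℝ) = ((1:ℤ):ℝ) := by norm_num
          _ ≤ ((|j - l| : ℤ) : ℝ) := by exact_mod_cast h1
          _ = |(j:ℝ) - (l:ℝ)| := by push_cast; rfl
      have hn0 : (0:ℝ) < n := lt_of_lt_of_le one_pos hn
      have hnt : (1:ℝ) ≤ n ^ τ := Real.one_le_rpow hn hτ.le
      have htb : (1:ℝ) ≤ t ^ b := Real.one_le_rpow ht hb.le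
      have hu : (1:ℝ) ≤ t ^ e := Real.one_le_rpow ht he.le
      have hN : (1:ℝ) ≤ n ^ p := Real.one_le_rpow hn hp.le
      set c : ℝ := n ^ τ * t ^ b with hc_def
      have hc : 0 < c := by
        have := Real.rpow_pos_of_pos hn0 τ
        have := Real.rpow_pos_of_pos ht0 b
        rw [hc_def]; positivity
      set V : ℝ := K * t ^ ((1:ℝ) - α) with hV_def
      have hV : 0 < V := by
        have := Real.rpow_pos_of_pos ht0 ((1:ℝ) - α)
        rw [hV_def]; positivity
      obtain ⟨v, hvV, hmap⟩ := hlaw t ht0 j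
      have hmset : MeasurableSet {x : ℝ | c ≤ |x|} :=
        (isClosed_le continuous_const continuous_abs).measurableSet
      have hset : {ω | j ≠ l ∧ |((j : ℝ)) - (l : ℝ)| ^ τ * t ^ b ≤ |η t j ω|}
          = η t j ⁻¹' {x | c ≤ |x|} := by
        ext ω; simp [hjl, hc_def, hn_def]
      rw [hset, ← Measure.map_apply (hmeas t j) hmset, hmap]
      refine (gauss_tail v hvV hV hc).trans ?_
      rw [hD_def, ← ENNReal.ofReal_mul (by positivity)]
      apply ENNReal.ofReal_le_ofReal
      -- real arithmetic
      have hc2 : t ^ ((1:ℝ) - α) ≤ c ^ 2 := by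
        calc t ^ ((1:ℝ) - α) ≤ t ^ (b * 2) := by
              apply Real.rpow_le_rpow_of_exponent_le ht
              rw [hb_def]; linarith
          _ = (t ^ b) ^ (2:ℕ) := by
              rw [← Real.rpow_natCast (t ^ b) 2, ← Real.rpow_mul ht0.le]; norm_num
          _ ≤ (n ^ τ) ^ (2:ℕ) * (t ^ b) ^ (2:ℕ) := by
              have h9 : (1:ℝ) ≤ (n ^ τ) ^ (2:ℕ) := one_le_pow₀ hnt
              exact le_mul_of_one_le_left (by positivity) h9
          _ = c ^ 2 := by rw [hc_def, mul_pow]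
      have hVc : Real.sqrt V ≤ Real.sqrt K * c := by
        calc Real.sqrt V ≤ Real.sqrt (K * c ^ 2) := by
              apply Real.sqrt_le_sqrt
              rw [hV_def]
              exact mul_le_mul_of_nonneg_left hc2 hK.le
          _ = Real.sqrt K * c := by
              rw [Real.sqrt_mul hK.le, Real.sqrt_sq hc.le]
      have hceq : c ^ 2 / (4 * V) = n ^ p * t ^ e / (4 * K) := by
        rw [hc_def, hV_def, mul_pow]
        have h1 : (n ^ τ) ^ (2:ℕ) = n ^ p := by
          rw [← Real.rpow_natCast (n ^ τ) 2, ← Real.rpow_mul hn0.le, hp_def]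
          norm_num [mul_comm]
        have h2 : (t ^ b) ^ (2:ℕ) = t ^ e * t ^ ((1:ℝ) - α) := by
          rw [← Real.rpow_natCast (t ^ b) 2, ← Real.rpow_mul ht0.le, ← Real.rpow_add ht0]
          congr 1
          rw [hb_def, he_def]; ring
        rw [h1, h2]
        have h3 : t ^ ((1:ℝ) - α) ≠ 0 := (Real.rpow_pos_of_pos ht0 _).ne'
        field_simp
      have hexp : Real.exp (-c ^ 2 / (4 * V))
          ≤ Real.exp (-(t ^ e / (8 * K))) * Real.exp (-(n ^ p * a)) := by
        rw [← Real.exp_add]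
        apply Real.exp_le_exp.mpr
        rw [neg_div, hceq, ha_def]
        have hw : (0:ℝ) < (8 * K)⁻¹ := by positivity
        have h48 : n ^ p * t ^ e / (4 * K) = n ^ p * t ^ e * (2 * (8 * K)⁻¹) := by
          field_simp; ring
        have hdiv : t ^ e / (8 * K) = t ^ e * (8 * K)⁻¹ := by ring
        rw [h48, hdiv]
        have k1 : t ^ e ≤ n ^ p * t ^ e := le_mul_of_one_le_left (by linarith) hN
        have k2 : n ^ p ≤ n ^ p * t ^ e := le_mul_of_one_le_right (by linarith) hu
        nlinarith [mul_nonneg (by linarith : (0:ℝ) ≤ 2 * (n ^ p * t ^ e) - t ^ e - n ^ p) hw.le]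
      calc 8 * Real.sqrt V / c * Real.exp (-c ^ 2 / (4 * V))
          ≤ 8 * (Real.sqrt K * c) / c * Real.exp (-c ^ 2 / (4 * V)) := by gcongr
        _ = 8 * Real.sqrt K * Real.exp (-c ^ 2 / (4 * V)) := by
            field_simp
        _ ≤ 8 * Real.sqrt K * (Real.exp (-(t ^ e / (8 * K))) * Real.exp (-(n ^ p * a))) := by
            have h8 : (0:ℝ) ≤ 8 * Real.sqrt K := by positivity
            exact mul_le_mul_of_nonneg_left hexp h8
        _ = 8 * Real.sqrt K * Real.exp (-(t ^ e / (8 * K))) * Real.exp (-(n ^ p * a)) := by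
            ring
  -- union bound
  have hbound : ∀ t : ℝ, 1 ≤ t →
      P {ω | ∃ l : ℤ, |l| ≤ (M : ℤ) ∧ ∃ j : ℤ, j ≠ l ∧
          |((j : ℝ)) - (l : ℝ)| ^ τ * t ^ b ≤ |η t j ω|} ≤ B * D t := by
    intro t ht
    have hsub : {ω | ∃ l : ℤ, |l| ≤ (M : ℤ) ∧ ∃ j : ℤ, j ≠ l ∧
          |((j : ℝ)) - (l : ℝ)| ^ τ * t ^ b ≤ |η t j ω|}
        ⊆ ⋃ l ∈ Finset.Icc (-(M:ℤ)) (M:ℤ), ⋃ j : ℤ,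
            {ω | j ≠ l ∧ |((j : ℝ)) - (l : ℝ)| ^ τ * t ^ b ≤ |η t j ω|} := by
      intro ω hω
      obtain ⟨l, hl, j, hjl, hthr⟩ := hω
      simp only [Set.mem_iUnion]
      exact ⟨l, by simpa [Finset.mem_Icc] using abs_le.mp hl, j, hjl, hthr⟩
    refine (measure_mono hsub).trans ?_
    refine (measure_biUnion_finset_le _ _).trans ?_
    have hl_bound : ∀ l ∈ Finset.Icc (-(M:ℤ)) (M:ℤ),
        P (⋃ j : ℤ, {ω | j ≠ l ∧ |((j : ℝ)) - (l : ℝ)| ^ τ * t ^ b ≤ |η t j ω|})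
          ≤ D t * C := by
      intro l _
      refine (measure_iUnion_le _).trans ?_
      refine (ENNReal.tsum_le_tsum (fun j => key t ht l j)).trans ?_
      rw [ENNReal.tsum_mul_left]
      apply mul_le_mul_right (le_of_eq ?_)
      rw [← hC_eq]
      have heq := (Equiv.subRight l).tsum_eq
        (f := fun k : ℤ => ENNReal.ofReal (Real.exp (-(|(k:ℝ)| ^ p * a))))
      rw [← heq]
      congr 1
      ext j
      rw [Equiv.subRight_apply]
      push_cast
      ring_nf
    refine (Finset.sum_le_sum hl_bound).trans ?_
    rw [Finset.sum_const, nsmul_eq_mul, hB_def]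
    exact le_of_eq (by ring)
  -- limit
  have hD : Tendsto D atTop (nhds 0) := by
    have h1 : Tendsto (fun t : ℝ => t ^ e) atTop atTop := tendsto_rpow_atTop he
    have h2 : Tendsto (fun t : ℝ => -(t ^ e / (8 * K))) atTop atBot :=
      tendsto_neg_atTop_atBot.comp (h1.atTop_div_const (by positivity))
    have h3 : Tendsto (fun t : ℝ => Real.exp (-(t ^ e / (8 * K)))) atTop (nhds 0) :=
      Real.tendsto_exp_atBot.comp h2
    have h4 : Tendsto (fun t : ℝ => 8 * Real.sqrt K * Real.exp (-(t ^ e / (8 * K))))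
        atTop (nhds 0) := by
      have := h3.const_mul (8 * Real.sqrt K)
      simpa using this
    rw [hD_def]
    have := ENNReal.tendsto_ofReal (f := atTop) h4
    simpa using this
  have hBD : Tendsto (fun t => B * D t) atTop (nhds 0) := by
    have := ENNReal.Tendsto.const_mul hD (Or.inr hB_ne)
    simpa using this
  apply tendsto_of_tendsto_of_tendsto_of_le_of_le' tendsto_const_nhds hBD
  · exact Eventually.of_forall (fun t => zero_le)
  · exact (eventually_ge_atTop 1).mono (fun t ht => hbound t ht)
end

section
/- Let (Ω, F, P) be a probability space and let X : ℤ → Ω → ℝ be a family of random variables whose law is shift-invariant, i.e. for every i ∈ ℤ the process (X_{i+ℓ})_{ℓ ∈ ℤ} has the same law as (X_ℓ)_{ℓ ∈ ℤ} as a random element of ℝ^ℤ. Then for every even integer m ≥ 2 and every integer k ≥ 1, P( X_{kj} < X_0 for every j ∈ ℤ with 1 ≤ |j| ≤ m ) ≤ 1/m. -/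
open MeasureTheory

theorem stmt16 {Ω : Type*} [MeasurableSpace Ω] (P : Measure Ω) [IsProbabilityMeasure P]
    (X : ℤ → Ω → ℝ) (hmeas : ∀ i, Measurable (X i))
    (hshift : ∀ i : ℤ,
      Measure.map (fun ω => fun l : ℤ => X (i + l) ω) P =
        Measure.map (fun ω => fun l : ℤ => X l ω) P)
    (m : ℕ) (hm : 2 ≤ m) (hme : Even m) (k : ℤ) (hk : 1 ≤ k) :
    P {ω | ∀ j : ℤ, 1 ≤ |j| → |j| ≤ (m : ℤ) → X (k * j) ω < X 0 ω}
      ≤ 1 / (m : ENNReal) := by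
  set S : Set (ℤ → ℝ) :=
    {f | ∀ j : ℤ, 1 ≤ |j| → |j| ≤ (m : ℤ) → f (k * j) < f 0} with hS
  have hSm : MeasurableSet S := by
    have : S = ⋂ (j : ℤ) (_ : 1 ≤ |j|) (_ : |j| ≤ (m : ℤ)),
        {f : ℤ → ℝ | f (k * j) < f 0} := by
      ext f; simp [hS, Set.mem_iInter]
    rw [this]
    exact MeasurableSet.iInter fun j => MeasurableSet.iInter fun _ =>
      MeasurableSet.iInter fun _ =>
        measurableSet_lt (measurable_pi_apply _) (measurable_pi_apply _)
  have hproc : ∀ c : ℤ, Measurable (fun ω => fun l : ℤ => X (c + l) ω) :=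
    fun c => measurable_pi_lambda _ fun l => hmeas _
  set A : ℕ → Set Ω := fun i =>
    {ω | ∀ j : ℤ, 1 ≤ |j| → |j| ≤ (m : ℤ) →
      X (k * i + k * j) ω < X (k * i) ω} with hA
  -- each A i is the preimage of S under the shifted process
  have hApre : ∀ i : ℕ, A i = (fun ω => fun l : ℤ => X (k * i + l) ω) ⁻¹' S := by
    intro i
    ext ω
    simp [hA, hS, Set.mem_preimage]
  have hAmeas : ∀ i : ℕ, MeasurableSet (A i) := by
    intro i; rw [hApre i]; exact (hproc _) hSm
  -- target set as preimage
  have htarget : {ω | ∀ j : ℤ, 1 ≤ |j| → |j| ≤ (m : ℤ) → X (k * j) ω < X 0 ω}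
      = (fun ω => fun l : ℤ => X l ω) ⁻¹' S := by
    ext ω; simp [hS, Set.mem_preimage]
  have hXmeas : Measurable (fun ω => fun l : ℤ => X l ω) :=
    measurable_pi_lambda _ fun l => hmeas _
  -- equal measures by shift invariance
  have hPA : ∀ i : ℕ,
      P (A i) = P {ω | ∀ j : ℤ, 1 ≤ |j| → |j| ≤ (m : ℤ) → X (k * j) ω < X 0 ω} := by
    intro i
    rw [hApre i, htarget]
    have h1 : P ((fun ω => fun l : ℤ => X (k * i + l) ω) ⁻¹' S)
        = Measure.map (fun ω => fun l : ℤ => X (k * i + l) ω) P S := by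
      rw [Measure.map_apply (hproc _) hSm]
    have h2 : P ((fun ω => fun l : ℤ => X l ω) ⁻¹' S)
        = Measure.map (fun ω => fun l : ℤ => X l ω) P S := by
      rw [Measure.map_apply hXmeas hSm]
    rw [h1, h2, hshift (k * i)]
  -- pairwise disjoint on range m
  have hdisj : Set.PairwiseDisjoint ↑(Finset.range m) A := by
    intro i hi i' hi' hne
    simp only [Finset.coe_range, Set.mem_Iio] at hi hi'
    rw [Function.onFun]
    rw [Set.disjoint_left]
    intro ω hωi hωi'
    have hne' : (i' : ℤ) - (i : ℤ) ≠ 0 := by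
      intro h
      exact hne (by omega : i = i')
    have hj : (1 : ℤ) ≤ |(i' : ℤ) - (i : ℤ)| := Int.one_le_abs hne'
    have hj' : |(i' : ℤ) - (i : ℤ)| ≤ (m : ℤ) := by
      rw [abs_le]; omega
    have hj2 : (1 : ℤ) ≤ |(i : ℤ) - (i' : ℤ)| := by
      rw [abs_sub_comm]; exact hj
    have hj2' : |(i : ℤ) - (i' : ℤ)| ≤ (m : ℤ) := by
      rw [abs_sub_comm]; exact hj'
    have h1 := hωi ((i' : ℤ) - i) hj hj'
    have h2 := hωi' ((i : ℤ) - i') hj2 hj2'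
    have e1 : k * (i : ℤ) + k * ((i' : ℤ) - i) = k * i' := by ring
    have e2 : k * (i' : ℤ) + k * ((i : ℤ) - i') = k * i := by ring
    rw [e1] at h1
    rw [e2] at h2
    exact lt_asymm h1 h2
  -- sum up
  have hsum : ∑ i ∈ Finset.range m, P (A i) = P (⋃ i ∈ Finset.range m, A i) :=
    (measure_biUnion_finset hdisj fun i _ => hAmeas i).symm
  have hle1 : ∑ i ∈ Finset.range m, P (A i) ≤ 1 := by
    rw [hsum]
    exact prob_le_one
  have hconst : ∑ i ∈ Finset.range m, P (A i)
      = (m : ENNReal) * P {ω | ∀ j : ℤ, 1 ≤ |j| → |j| ≤ (m : ℤ) → X (k * j) ω < X 0 ω} := by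
    rw [Finset.sum_congr rfl fun i _ => hPA i]
    simp [Finset.sum_const, mul_comm]
  rw [hconst] at hle1
  rw [ENNReal.le_div_iff_mul_le (Or.inl (by exact_mod_cast (Nat.pos_of_ne_zero (by omega)).ne'))
    (Or.inl (ENNReal.natCast_ne_top m))]
  rwa [mul_comm]
end
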